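/- arXiv:2403.06216 — 7 statements merged into one kernel-verified Lean document; each statement's English description precedes it below -/
import Mathlib

section
/- If f and g are functions on S^{n-1} lying in H_{ℓ≤1} (i.e. each is a constant plus a linear combination of restricted coordinate functions), then the projection onto the ℓ=2 eigenspace satisfies (∇f · ∇g)_{ℓ=2} = −(fg)_{ℓ=2}; equivalently, for every eigenfunction φ with Δφ = −2n φ one has ∫_{S^{n-1}} (∇f·∇g) φ = −∫_{S^{n-1}} f g φ. -/
open scoped RealInnerProductSpace Pointwise
open MeasureTheory Metric Set

namespace SphereProjAux

variable {n : ℕ}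

/-- The map induced on the unit sphere by a linear isometry equivalence. -/
noncomputable def sMap (e : EuclideanSpace ℝ (Fin n) ≃ₗᵢ[ℝ] EuclideanSpace ℝ (Fin n)) :
    sphere (0 : EuclideanSpace ℝ (Fin n)) 1 → sphere (0 : EuclideanSpace ℝ (Fin n)) 1 :=
  fun x => ⟨e x, by
    have hx : ‖(x : EuclideanSpace ℝ (Fin n))‖ = 1 := by
      simpa [mem_sphere_zero_iff_norm] using x.2
    simp [mem_sphere_zero_iff_norm, e.norm_map, hx]⟩

lemma continuous_sMap (e : EuclideanSpace ℝ (Fin n) ≃ₗᵢ[ℝ] EuclideanSpace ℝ (Fin n)) :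
    Continuous (sMap e) :=
  Continuous.subtype_mk (e.continuous.comp continuous_subtype_val) _

lemma toSphere_map (e : EuclideanSpace ℝ (Fin n) ≃ₗᵢ[ℝ] EuclideanSpace ℝ (Fin n)) :
    ((volume : Measure (EuclideanSpace ℝ (Fin n))).toSphere).map (sMap e)
      = (volume : Measure (EuclideanSpace ℝ (Fin n))).toSphere := by
  have hc : Continuous (sMap e) := continuous_sMap e
  have key : ∀ C : Set (EuclideanSpace ℝ (Fin n)), volume (e ⁻¹' C) = volume C := by
    intro C
    have h1 := e.measurePreserving.map_eq
    have h2 : (volume : Measure (EuclideanSpace ℝ (Fin n))).map e C = volume (e ⁻¹' C) := by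
      rw [show ⇑e = ⇑(e.toHomeomorph.toMeasurableEquiv) from rfl]
      exact MeasurableEquiv.map_apply _ _
    rw [← h2, h1]
  refine Measure.ext fun s hs => ?_
  rw [Measure.map_apply hc.measurable hs,
    Measure.toSphere_apply' _ (hc.measurable hs), Measure.toSphere_apply' _ hs]
  congr 1
  have himg : (Subtype.val '' (sMap e ⁻¹' s)) = e ⁻¹' (Subtype.val '' s) := by
    ext y
    constructor
    · rintro ⟨x, hx, rfl⟩
      exact ⟨sMap e x, hx, rfl⟩
    · rintro ⟨z, hz, hzy⟩
      have hy : y ∈ sphere (0 : EuclideanSpace ℝ (Fin n)) 1 := by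
        have hz1 : ‖(z : EuclideanSpace ℝ (Fin n))‖ = 1 := by
          simpa [mem_sphere_zero_iff_norm] using z.2
        rw [hzy] at hz1
        simpa [mem_sphere_zero_iff_norm, e.norm_map] using hz1
      refine ⟨⟨y, hy⟩, ?_, rfl⟩
      have : sMap e ⟨y, hy⟩ = z := Subtype.ext hzy.symm
      simpa [Set.mem_preimage, this] using hz
  rw [himg]
  have hsmul : Ioo (0:ℝ) 1 • (e ⁻¹' (Subtype.val '' s))
      = e ⁻¹' (Ioo (0:ℝ) 1 • (Subtype.val '' s)) := by
    ext x
    simp only [Set.mem_smul, Set.mem_preimage]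
    constructor
    · rintro ⟨r, hr, y, hy, rfl⟩
      exact ⟨r, hr, e y, hy, (_root_.map_smul e r y).symm⟩
    · rintro ⟨r, hr, z, hz, hrz⟩
      refine ⟨r, hr, e.symm z, by simpa using hz, ?_⟩
      have := congrArg e.symm hrz
      simpa [_root_.map_smul] using this
  rw [hsmul, key]


lemma integral_comp_isometry (e : EuclideanSpace ℝ (Fin n) ≃ₗᵢ[ℝ] EuclideanSpace ℝ (Fin n))
    (f : EuclideanSpace ℝ (Fin n) → ℝ) (hf : Continuous f) :
    ∫ x : sphere (0 : EuclideanSpace ℝ (Fin n)) 1, f (e ↑x)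
        ∂(volume : Measure (EuclideanSpace ℝ (Fin n))).toSphere
      = ∫ x : sphere (0 : EuclideanSpace ℝ (Fin n)) 1, f ↑x
        ∂(volume : Measure (EuclideanSpace ℝ (Fin n))).toSphere := by
  have hfm : AEStronglyMeasurable (fun y : sphere (0 : EuclideanSpace ℝ (Fin n)) 1 => f ↑y)
      (((volume : Measure (EuclideanSpace ℝ (Fin n))).toSphere).map (sMap e)) := by
    rw [toSphere_map]
    exact (hf.comp continuous_subtype_val).aestronglyMeasurable
  have h1 := integral_map (μ := (volume : Measure (EuclideanSpace ℝ (Fin n))).toSphere)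
    (continuous_sMap e).measurable.aemeasurable hfm
  rw [toSphere_map] at h1
  exact h1.symm

lemma integrable_cont (f : EuclideanSpace ℝ (Fin n) → ℝ) (hf : Continuous f) :
    Integrable (fun x : sphere (0 : EuclideanSpace ℝ (Fin n)) 1 => f ↑x)
      (volume : Measure (EuclideanSpace ℝ (Fin n))).toSphere :=
  (hf.comp continuous_subtype_val).integrable_of_hasCompactSupport
    (HasCompactSupport.of_compactSpace _)

lemma continuous_coord (i : Fin n) : Continuous (fun y : EuclideanSpace ℝ (Fin n) => y i) :=
  (EuclideanSpace.proj i).continuous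

lemma integral_odd (f : EuclideanSpace ℝ (Fin n) → ℝ) (hf : Continuous f)
    (hodd : ∀ y, f (-y) = - f y) :
    ∫ x : sphere (0 : EuclideanSpace ℝ (Fin n)) 1, f ↑x
        ∂(volume : Measure (EuclideanSpace ℝ (Fin n))).toSphere = 0 := by
  have h := integral_comp_isometry (LinearIsometryEquiv.neg ℝ) f hf
  simp only [show ∀ y : EuclideanSpace ℝ (Fin n), (LinearIsometryEquiv.neg ℝ) y = -y
    from fun y => rfl, hodd, integral_neg] at h
  linarith

lemma integral_coord_mul_coord_offdiag {i j : Fin n} (hij : i ≠ j) :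
    ∫ x : sphere (0 : EuclideanSpace ℝ (Fin n)) 1, ((x : EuclideanSpace ℝ (Fin n)) i
        * (x : EuclideanSpace ℝ (Fin n)) j)
        ∂(volume : Measure (EuclideanSpace ℝ (Fin n))).toSphere = 0 := by
  classical
  set e : EuclideanSpace ℝ (Fin n) ≃ₗᵢ[ℝ] EuclideanSpace ℝ (Fin n) :=
    LinearIsometryEquiv.piLpCongrRight 2
      (fun k => if k = i then LinearIsometryEquiv.neg ℝ else LinearIsometryEquiv.refl ℝ ℝ)
  have he : ∀ (y : EuclideanSpace ℝ (Fin n)) (k : Fin n),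
      (e y) k = if k = i then -(y k) else y k := by
    intro y k
    simp only [e, LinearIsometryEquiv.piLpCongrRight_apply]
    by_cases h : k = i
    · subst h; simp
    · simp [h]
  have h := integral_comp_isometry e (fun y => y i * y j)
    ((continuous_coord i).mul (continuous_coord j))
  simp only [he, if_pos rfl, if_neg (Ne.symm hij), eq_self_iff_true, if_true, neg_mul, integral_neg] at h
  linarith

lemma integral_coord_sq (i j : Fin n) :
    ∫ x : sphere (0 : EuclideanSpace ℝ (Fin n)) 1, ((x : EuclideanSpace ℝ (Fin n)) i
        * (x : EuclideanSpace ℝ (Fin n)) i)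
        ∂(volume : Measure (EuclideanSpace ℝ (Fin n))).toSphere
      = ∫ x : sphere (0 : EuclideanSpace ℝ (Fin n)) 1, ((x : EuclideanSpace ℝ (Fin n)) j
        * (x : EuclideanSpace ℝ (Fin n)) j)
        ∂(volume : Measure (EuclideanSpace ℝ (Fin n))).toSphere := by
  classical
  set e : EuclideanSpace ℝ (Fin n) ≃ₗᵢ[ℝ] EuclideanSpace ℝ (Fin n) :=
    LinearIsometryEquiv.piLpCongrLeft 2 ℝ ℝ (Equiv.swap i j)
  have he : ∀ y : EuclideanSpace ℝ (Fin n), (e y) i = y j := by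
    intro y
    simp only [e, LinearIsometryEquiv.piLpCongrLeft_apply, Equiv.piCongrLeft'_apply,
      Equiv.symm_swap]
    rw [Equiv.swap_apply_left]
  have h := integral_comp_isometry e (fun y => y i * y i)
    ((continuous_coord i).mul (continuous_coord i))
  simp only [he] at h
  exact h.symm


lemma contφ (A : Matrix (Fin n) (Fin n) ℝ) :
    Continuous (fun y : EuclideanSpace ℝ (Fin n) => ∑ i, ∑ j, A i j * y i * y j) :=
  continuous_finset_sum _ fun i _ => continuous_finset_sum _ fun j _ =>
    (continuous_const.mul (continuous_coord i)).mul (continuous_coord j)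

lemma integral_phi_zero (A : Matrix (Fin n) (Fin n) ℝ) (htr : A.trace = 0) :
    ∫ x : sphere (0 : EuclideanSpace ℝ (Fin n)) 1,
      (∑ i, ∑ j, A i j * (x : EuclideanSpace ℝ (Fin n)) i * (x : EuclideanSpace ℝ (Fin n)) j)
      ∂(volume : Measure (EuclideanSpace ℝ (Fin n))).toSphere = 0 := by
  classical
  rcases Nat.eq_zero_or_pos n with hn | hn
  · subst hn
    simp
  have hint : ∀ i j : Fin n, Integrable (fun x : sphere (0 : EuclideanSpace ℝ (Fin n)) 1 =>
      A i j * (x : EuclideanSpace ℝ (Fin n)) i * (x : EuclideanSpace ℝ (Fin n)) j)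
      (volume : Measure (EuclideanSpace ℝ (Fin n))).toSphere := fun i j =>
    integrable_cont _ ((continuous_const.mul (continuous_coord i)).mul (continuous_coord j))
  rw [integral_finset_sum _ (fun i _ => integrable_finset_sum _ (fun j _ => hint i j))]
  have hterm : ∀ i j : Fin n, ∫ x : sphere (0 : EuclideanSpace ℝ (Fin n)) 1,
      A i j * (x : EuclideanSpace ℝ (Fin n)) i * (x : EuclideanSpace ℝ (Fin n)) j
      ∂(volume : Measure (EuclideanSpace ℝ (Fin n))).toSphere
      = A i j * ∫ x : sphere (0 : EuclideanSpace ℝ (Fin n)) 1,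
        ((x : EuclideanSpace ℝ (Fin n)) i * (x : EuclideanSpace ℝ (Fin n)) j)
        ∂(volume : Measure (EuclideanSpace ℝ (Fin n))).toSphere := by
    intro i j
    simp only [mul_assoc]
    exact integral_const_mul _ _
  set i0 : Fin n := ⟨0, hn⟩
  set K := ∫ x : sphere (0 : EuclideanSpace ℝ (Fin n)) 1,
    ((x : EuclideanSpace ℝ (Fin n)) i0 * (x : EuclideanSpace ℝ (Fin n)) i0)
    ∂(volume : Measure (EuclideanSpace ℝ (Fin n))).toSphere with hK
  have hrow : ∀ i : Fin n, (∫ x : sphere (0 : EuclideanSpace ℝ (Fin n)) 1,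
      (∑ j, A i j * (x : EuclideanSpace ℝ (Fin n)) i * (x : EuclideanSpace ℝ (Fin n)) j)
      ∂(volume : Measure (EuclideanSpace ℝ (Fin n))).toSphere) = A i i * K := by
    intro i
    rw [integral_finset_sum _ (fun j _ => hint i j)]
    rw [Finset.sum_eq_single i]
    · rw [hterm, integral_coord_sq i i0]
    · intro j _ hji
      rw [hterm, integral_coord_mul_coord_offdiag (Ne.symm hji), mul_zero]
    · intro h
      exact absurd (Finset.mem_univ i) h
  simp only [hrow]
  rw [← Finset.sum_mul]
  have : (∑ i, A i i) = 0 := by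
    simpa [Matrix.trace, Matrix.diag] using htr
  rw [this, zero_mul]

end SphereProjAux

open SphereProjAux

/-- For `f = a₀ + ⟪a,·⟫` and `g = b₀ + ⟪b,·⟫` in `H_{ℓ≤1}` on `S^{n-1}`
(whose tangential gradients are `∇f(x) = a − ⟪a,x⟫x`, so
`∇f·∇g = ⟪a,b⟫ − ⟪a,x⟫⟪b,x⟫`), and every `ℓ=2` spherical harmonic
`φ(x) = ∑ A_{ij} x_i x_j` with `A` symmetric traceless, one has
`∫ (∇f·∇g) φ = − ∫ f g φ`; i.e. `(∇f·∇g)_{ℓ=2} = −(fg)_{ℓ=2}`. -/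
theorem grad_product_ell2_projection
    (n : ℕ) (hn : 2 ≤ n)
    (a₀ b₀ : ℝ) (a b : EuclideanSpace ℝ (Fin n))
    (A : Matrix (Fin n) (Fin n) ℝ) (hA : A.IsSymm) (htr : A.trace = 0) :
    (∫ x : Metric.sphere (0 : EuclideanSpace ℝ (Fin n)) 1,
        (fun y : EuclideanSpace ℝ (Fin n) =>
          (⟪a, b⟫ - ⟪a, y⟫ * ⟪b, y⟫) * ∑ i, ∑ j, A i j * y i * y j) ↑x
        ∂(volume : Measure (EuclideanSpace ℝ (Fin n))).toSphere)
    = - ∫ x : Metric.sphere (0 : EuclideanSpace ℝ (Fin n)) 1,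
        (fun y : EuclideanSpace ℝ (Fin n) =>
          (a₀ + ⟪a, y⟫) * (b₀ + ⟪b, y⟫) * ∑ i, ∑ j, A i j * y i * y j) ↑x
        ∂(volume : Measure (EuclideanSpace ℝ (Fin n))).toSphere := by
  classical
  have hφ := integral_phi_zero A htr
  have hsum_neg : ∀ y : EuclideanSpace ℝ (Fin n),
      (∑ i, ∑ j, A i j * (-y) i * (-y) j) = ∑ i, ∑ j, A i j * y i * y j := by
    intro y
    refine Finset.sum_congr rfl fun i _ => Finset.sum_congr rfl fun j _ => ?_
    show A i j * (-(y i)) * (-(y j)) = A i j * y i * y j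
    ring
  have hodd : ∀ v : EuclideanSpace ℝ (Fin n),
      ∫ x : Metric.sphere (0 : EuclideanSpace ℝ (Fin n)) 1,
        (⟪v, (x : EuclideanSpace ℝ (Fin n))⟫ * ∑ i, ∑ j,
          A i j * (x : EuclideanSpace ℝ (Fin n)) i * (x : EuclideanSpace ℝ (Fin n)) j)
        ∂(volume : Measure (EuclideanSpace ℝ (Fin n))).toSphere = 0 := by
    intro v
    refine integral_odd (fun y => ⟪v, y⟫ * ∑ i, ∑ j, A i j * y i * y j)
      ((continuous_const.inner continuous_id).mul (contφ A)) fun y => ?_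
    simp only [hsum_neg, inner_neg_right, neg_mul]
  have e1 : ∀ y : EuclideanSpace ℝ (Fin n),
      (⟪a, b⟫ - ⟪a, y⟫ * ⟪b, y⟫) * (∑ i, ∑ j, A i j * y i * y j)
        = ⟪a, b⟫ * (∑ i, ∑ j, A i j * y i * y j)
          - ⟪a, y⟫ * ⟪b, y⟫ * (∑ i, ∑ j, A i j * y i * y j) := by
    intro y; ring
  have e2 : ∀ y : EuclideanSpace ℝ (Fin n),
      (a₀ + ⟪a, y⟫) * (b₀ + ⟪b, y⟫) * (∑ i, ∑ j, A i j * y i * y j)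
        = (a₀ * b₀) * (∑ i, ∑ j, A i j * y i * y j)
          + (b₀ * (⟪a, y⟫ * ∑ i, ∑ j, A i j * y i * y j)
            + (a₀ * (⟪b, y⟫ * ∑ i, ∑ j, A i j * y i * y j)
              + ⟪a, y⟫ * ⟪b, y⟫ * (∑ i, ∑ j, A i j * y i * y j))) := by
    intro y; ring
  have int1 : Integrable (fun x : Metric.sphere (0 : EuclideanSpace ℝ (Fin n)) 1 =>
      ⟪a, b⟫ * ∑ i, ∑ j, A i j * (x : EuclideanSpace ℝ (Fin n)) i
        * (x : EuclideanSpace ℝ (Fin n)) j)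
      (volume : Measure (EuclideanSpace ℝ (Fin n))).toSphere :=
    integrable_cont _ (continuous_const.mul (contφ A))
  have intq : Integrable (fun x : Metric.sphere (0 : EuclideanSpace ℝ (Fin n)) 1 =>
      ⟪a, (x : EuclideanSpace ℝ (Fin n))⟫ * ⟪b, (x : EuclideanSpace ℝ (Fin n))⟫
        * ∑ i, ∑ j, A i j * (x : EuclideanSpace ℝ (Fin n)) i
          * (x : EuclideanSpace ℝ (Fin n)) j)
      (volume : Measure (EuclideanSpace ℝ (Fin n))).toSphere :=
    integrable_cont _ (((continuous_const.inner continuous_id).mul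
      (continuous_const.inner continuous_id)).mul (contφ A))
  have intc : Integrable (fun x : Metric.sphere (0 : EuclideanSpace ℝ (Fin n)) 1 =>
      (a₀ * b₀) * ∑ i, ∑ j, A i j * (x : EuclideanSpace ℝ (Fin n)) i
        * (x : EuclideanSpace ℝ (Fin n)) j)
      (volume : Measure (EuclideanSpace ℝ (Fin n))).toSphere :=
    integrable_cont _ (continuous_const.mul (contφ A))
  have intv : ∀ (c : ℝ) (v : EuclideanSpace ℝ (Fin n)),
      Integrable (fun x : Metric.sphere (0 : EuclideanSpace ℝ (Fin n)) 1 =>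
        c * (⟪v, (x : EuclideanSpace ℝ (Fin n))⟫
          * ∑ i, ∑ j, A i j * (x : EuclideanSpace ℝ (Fin n)) i
            * (x : EuclideanSpace ℝ (Fin n)) j))
        (volume : Measure (EuclideanSpace ℝ (Fin n))).toSphere := fun c v =>
    integrable_cont _ (continuous_const.mul
      ((continuous_const.inner continuous_id).mul (contφ A)))
  simp only [e1, e2]
  have int3 : Integrable (fun x : Metric.sphere (0 : EuclideanSpace ℝ (Fin n)) 1 =>
      a₀ * (⟪b, (x : EuclideanSpace ℝ (Fin n))⟫
          * ∑ i, ∑ j, A i j * (x : EuclideanSpace ℝ (Fin n)) i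
            * (x : EuclideanSpace ℝ (Fin n)) j)
        + ⟪a, (x : EuclideanSpace ℝ (Fin n))⟫ * ⟪b, (x : EuclideanSpace ℝ (Fin n))⟫
          * ∑ i, ∑ j, A i j * (x : EuclideanSpace ℝ (Fin n)) i
            * (x : EuclideanSpace ℝ (Fin n)) j)
      (volume : Measure (EuclideanSpace ℝ (Fin n))).toSphere := (intv a₀ b).add intq
  have int4 : Integrable (fun x : Metric.sphere (0 : EuclideanSpace ℝ (Fin n)) 1 =>
      b₀ * (⟪a, (x : EuclideanSpace ℝ (Fin n))⟫
          * ∑ i, ∑ j, A i j * (x : EuclideanSpace ℝ (Fin n)) i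
            * (x : EuclideanSpace ℝ (Fin n)) j)
        + (a₀ * (⟪b, (x : EuclideanSpace ℝ (Fin n))⟫
          * ∑ i, ∑ j, A i j * (x : EuclideanSpace ℝ (Fin n)) i
            * (x : EuclideanSpace ℝ (Fin n)) j)
        + ⟪a, (x : EuclideanSpace ℝ (Fin n))⟫ * ⟪b, (x : EuclideanSpace ℝ (Fin n))⟫
          * ∑ i, ∑ j, A i j * (x : EuclideanSpace ℝ (Fin n)) i
            * (x : EuclideanSpace ℝ (Fin n)) j))
      (volume : Measure (EuclideanSpace ℝ (Fin n))).toSphere := (intv b₀ a).add int3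
  rw [integral_sub int1 intq]
  rw [integral_add intc int4]
  rw [integral_add (intv b₀ a) int3]
  rw [integral_add (intv a₀ b) intq]
  rw [integral_const_mul, integral_const_mul, integral_const_mul, integral_const_mul,
    hφ, hodd a, hodd b]
  ring
end

section
/- For the metric g = u(r,θ)² dr² + r² g_{S^{n-1}}, the Ricci curvature satisfies Ric(∂_a, ν) = ((n-2)/r) u^{-2} u_a, where ν = u^{-1} ∂_r is the unit normal to the level spheres and ∂_a is tangent to S^{n-1}. -/
/-- Partial derivative of a function on `ℝᵐ` in the `i`-th coordinate direction. -/
noncomputable def pderiv' {m : ℕ} (i : Fin m) (f : (Fin m → ℝ) → ℝ) (x : Fin m → ℝ) : ℝ :=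
  fderiv ℝ f x (Pi.single i 1)

/-- Christoffel symbols `Γ^k_{ij}` of a metric `G` in coordinates. -/
noncomputable def Christoffel {m : ℕ} (G : (Fin m → ℝ) → Matrix (Fin m) (Fin m) ℝ)
    (k i j : Fin m) (x : Fin m → ℝ) : ℝ :=
  (1 / 2) * ∑ l, (G x)⁻¹ k l *
    (pderiv' i (fun y => G y l j) x + pderiv' j (fun y => G y l i) x
      - pderiv' l (fun y => G y i j) x)

/-- Ricci curvature `R_{ij} = ∂_k Γ^k_{ij} − ∂_j Γ^k_{ki} + Γ^k_{kl} Γ^l_{ij} − Γ^k_{jl} Γ^l_{ki}`. -/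
noncomputable def RicciC {m : ℕ} (G : (Fin m → ℝ) → Matrix (Fin m) (Fin m) ℝ)
    (i j : Fin m) (x : Fin m → ℝ) : ℝ :=
  (∑ k, pderiv' k (Christoffel G k i j) x) - (∑ k, pderiv' j (Christoffel G k k i) x)
    + (∑ k, ∑ l, Christoffel G k k l x * Christoffel G l i j x)
    - (∑ k, ∑ l, Christoffel G k j l x * Christoffel G l k i x)

/-- Covariant Hessian `∇²f` of a function in coordinates. -/
noncomputable def HessC {m : ℕ} (G : (Fin m → ℝ) → Matrix (Fin m) (Fin m) ℝ)
    (f : (Fin m → ℝ) → ℝ) (i j : Fin m) (x : Fin m → ℝ) : ℝ :=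
  pderiv' i (pderiv' j f) x - ∑ k, Christoffel G k i j x * pderiv' k f x

/-- Laplace–Beltrami operator `Δ_G f = G^{ij} ∇²_{ij} f`. -/
noncomputable def LapC {m : ℕ} (G : (Fin m → ℝ) → Matrix (Fin m) (Fin m) ℝ)
    (f : (Fin m → ℝ) → ℝ) (x : Fin m → ℝ) : ℝ :=
  ∑ i, ∑ j, (G x)⁻¹ i j * HessC G f i j x

/-- Scalar curvature `R = G^{ij} R_{ij}`. -/
noncomputable def ScalarC {m : ℕ} (G : (Fin m → ℝ) → Matrix (Fin m) (Fin m) ℝ)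
    (x : Fin m → ℝ) : ℝ :=
  ∑ i, ∑ j, (G x)⁻¹ i j * RicciC G i j x

/-- The quasi-spherical metric `g = u(r,θ)² dr² + r² σ(θ)` on coordinates
`(r, θ) ∈ ℝ × ℝᵈ`, where index `0` is the radial coordinate `r = x 0`. -/
noncomputable def quasiSphericalMetric (d : ℕ) (u : (Fin (d + 1) → ℝ) → ℝ)
    (σ : (Fin d → ℝ) → Matrix (Fin d) (Fin d) ℝ) :
    (Fin (d + 1) → ℝ) → Matrix (Fin (d + 1)) (Fin (d + 1)) ℝ :=
  fun x => Matrix.of fun i j =>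
    if hi : i = 0 then (if j = 0 then (u x) ^ 2 else 0)
    else if hj : j = 0 then 0
    else (x 0) ^ 2 * σ (Fin.tail x) (i.pred hi) (j.pred hj)


set_option maxHeartbeats 1000000

section AUX
variable {d : ℕ} (u : (Fin (d + 1) → ℝ) → ℝ) (σ : (Fin d → ℝ) → Matrix (Fin d) (Fin d) ℝ)

lemma qs_00 (x) : quasiSphericalMetric d u σ x 0 0 = u x ^ 2 := by
  simp [quasiSphericalMetric]

lemma qs_0s (x) (b : Fin d) : quasiSphericalMetric d u σ x 0 b.succ = 0 := by
  simp [quasiSphericalMetric, (Fin.succ_ne_zero b)]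

lemma qs_s0 (x) (b : Fin d) : quasiSphericalMetric d u σ x b.succ 0 = 0 := by
  simp [quasiSphericalMetric, (Fin.succ_ne_zero b)]

lemma qs_ss (x) (a b : Fin d) :
    quasiSphericalMetric d u σ x a.succ b.succ = (x 0) ^ 2 * σ (Fin.tail x) a b := by
  simp [quasiSphericalMetric, (Fin.succ_ne_zero a), (Fin.succ_ne_zero b)]

/-- explicit inverse metric -/
noncomputable def qsInv (x : Fin (d+1) → ℝ) : Matrix (Fin (d+1)) (Fin (d+1)) ℝ :=
  Matrix.of fun i j =>
    if hi : i = 0 then (if j = 0 then (u x ^ 2)⁻¹ else 0)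
    else if hj : j = 0 then 0
    else ((x 0) ^ 2)⁻¹ * (σ (Fin.tail x))⁻¹ (i.pred hi) (j.pred hj)

lemma qsInv_00 (x) : qsInv u σ x 0 0 = (u x ^ 2)⁻¹ := by simp [qsInv]
lemma qsInv_0s (x) (b : Fin d) : qsInv u σ x 0 b.succ = 0 := by
  simp [qsInv, (Fin.succ_ne_zero b)]
lemma qsInv_s0 (x) (b : Fin d) : qsInv u σ x b.succ 0 = 0 := by
  simp [qsInv, (Fin.succ_ne_zero b)]
lemma qsInv_ss (x) (a b : Fin d) :
    qsInv u σ x a.succ b.succ = ((x 0) ^ 2)⁻¹ * (σ (Fin.tail x))⁻¹ a b := by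
  simp [qsInv, (Fin.succ_ne_zero a), (Fin.succ_ne_zero b)]

lemma qs_inv_eq (hσinv : ∀ θ, IsUnit (σ θ).det) (x) (hx : x 0 ≠ 0) (hu : u x ≠ 0) :
    (quasiSphericalMetric d u σ x)⁻¹ = qsInv u σ x := by
  apply Matrix.inv_eq_right_inv
  ext i j
  rw [Matrix.mul_apply, Fin.sum_univ_succ]
  induction i using Fin.cases with
  | zero =>
    induction j using Fin.cases with
    | zero =>
      simp [qs_00, qs_0s, qsInv_00, qsInv_s0, Matrix.one_apply, pow_ne_zero _ hu]
    | succ j =>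
      simp [qs_00, qs_0s, qsInv_0s, qsInv_ss, Matrix.one_apply, (Fin.succ_ne_zero j).symm]
  | succ i =>
    induction j using Fin.cases with
    | zero =>
      simp [qs_s0, qs_ss, qsInv_00, qsInv_s0, Matrix.one_apply, Fin.succ_ne_zero i]
    | succ j =>
      have h1 : ∀ k, quasiSphericalMetric d u σ x i.succ k.succ * qsInv u σ x k.succ j.succ
          = σ (Fin.tail x) i k * (σ (Fin.tail x))⁻¹ k j := by
        intro k
        rw [qs_ss, qsInv_ss]
        field_simp
      simp only [qs_s0, qsInv_0s, zero_mul, mul_zero, zero_add, h1]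
      rw [← Matrix.mul_apply, Matrix.mul_nonsing_inv _ (hσinv _), Matrix.one_apply,
        Matrix.one_apply]
      simp [Fin.succ_inj]
end AUX

section CALC
variable {d m : ℕ} {x : Fin m → ℝ}

lemma pderiv'_congr_nhds {i : Fin m} {f g : (Fin m → ℝ) → ℝ} {x} (h : f =ᶠ[nhds x] g) :
    pderiv' i f x = pderiv' i g x := by
  unfold pderiv'; rw [h.fderiv_eq]

lemma contDiff_pderiv' {f : (Fin m → ℝ) → ℝ} (hf : ContDiff ℝ (⊤ : ℕ∞) f) (i : Fin m) :
    ContDiff ℝ (⊤ : ℕ∞) (pderiv' i f) := by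
  exact (hf.fderiv_right (le_refl _)).clm_apply contDiff_const

noncomputable def tailCLM (d : ℕ) : (Fin (d+1) → ℝ) →L[ℝ] (Fin d → ℝ) :=
  ContinuousLinearMap.pi fun i => ContinuousLinearMap.proj i.succ

lemma tailCLM_apply (y : Fin (d+1) → ℝ) : tailCLM d y = Fin.tail y := rfl

lemma tailCLM_single_zero : tailCLM d (Pi.single 0 1) = 0 := by
  funext i
  simp [tailCLM, Pi.single_apply, (Fin.succ_ne_zero i)]

lemma tailCLM_single_succ (b : Fin d) :
    tailCLM d (Pi.single b.succ 1) = Pi.single b 1 := by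
  funext i
  simp [tailCLM, Pi.single_apply, Fin.succ_inj, eq_comm]

lemma hasFDerivAt_tail (f : (Fin d → ℝ) → ℝ) (x : Fin (d+1) → ℝ)
    (hf : DifferentiableAt ℝ f (Fin.tail x)) :
    HasFDerivAt (fun y => f (Fin.tail y)) ((fderiv ℝ f (Fin.tail x)).comp (tailCLM d)) x := by
  have := (hf.hasFDerivAt).comp x (tailCLM d).hasFDerivAt
  exact this

lemma pderiv'_tail_zero (f : (Fin d → ℝ) → ℝ) (x : Fin (d+1) → ℝ)
    (hf : DifferentiableAt ℝ f (Fin.tail x)) :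
    pderiv' 0 (fun y => f (Fin.tail y)) x = 0 := by
  unfold pderiv'
  rw [(hasFDerivAt_tail f x hf).fderiv]
  simp [tailCLM_single_zero]

lemma pderiv'_tail_succ (f : (Fin d → ℝ) → ℝ) (x : Fin (d+1) → ℝ)
    (hf : DifferentiableAt ℝ f (Fin.tail x)) (b : Fin d) :
    pderiv' b.succ (fun y => f (Fin.tail y)) x = pderiv' b f (Fin.tail x) := by
  unfold pderiv'
  rw [(hasFDerivAt_tail f x hf).fderiv]
  simp [tailCLM_single_succ]

lemma pderiv'_const (i : Fin m) (c : ℝ) (x) : pderiv' i (fun _ => c) x = 0 := by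
  simp [pderiv']

lemma pderiv'_mul {f g : (Fin m → ℝ) → ℝ} (hf : DifferentiableAt ℝ f x)
    (hg : DifferentiableAt ℝ g x) (i : Fin m) :
    pderiv' i (fun y => f y * g y) x = f x * pderiv' i g x + g x * pderiv' i f x := by
  unfold pderiv'
  rw [fderiv_fun_mul hf hg]
  simp

lemma pderiv'_inv {f : (Fin m → ℝ) → ℝ} (hf : DifferentiableAt ℝ f x) (hfx : f x ≠ 0)
    (i : Fin m) :
    pderiv' i (fun y => (f y)⁻¹) x = -(f x)⁻¹ * (f x)⁻¹ * pderiv' i f x := by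
  unfold pderiv'
  have h := ((hasFDerivAt_inv' (𝕜 := ℝ) hfx).comp x hf.hasFDerivAt).fderiv
  rw [show (fun y => (f y)⁻¹) = Inv.inv ∘ f from rfl, h]
  simp [ContinuousLinearMap.comp_apply, ContinuousLinearMap.mulLeftRight_apply]
  ring

lemma pderiv'_div {f g : (Fin m → ℝ) → ℝ} (hf : DifferentiableAt ℝ f x)
    (hg : DifferentiableAt ℝ g x) (hgx : g x ≠ 0) (i : Fin m) :
    pderiv' i (fun y => f y / g y) x
      = (pderiv' i f x * g x - f x * pderiv' i g x) / g x ^ 2 := by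
  have h1 : (fun y => f y / g y) = fun y => f y * (g y)⁻¹ := by
    funext y; rw [div_eq_mul_inv]
  rw [h1, pderiv'_mul (g := fun y => (g y)⁻¹) hf (hg.inv hgx), pderiv'_inv hg hgx]
  field_simp
  ring

lemma pderiv'_sq {f : (Fin m → ℝ) → ℝ} (hf : DifferentiableAt ℝ f x) (i : Fin m) :
    pderiv' i (fun y => f y ^ 2) x = 2 * f x * pderiv' i f x := by
  have h1 : (fun y => f y ^ 2) = fun y => f y * f y := by funext y; ring
  rw [h1, pderiv'_mul hf hf]
  ring

lemma pderiv'_coord0 (i : Fin (d+1)) (x : Fin (d+1) → ℝ) :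
    pderiv' i (fun y => y 0) x = if i = 0 then 1 else 0 := by
  unfold pderiv'
  have h : (fun y : Fin (d+1) → ℝ => y 0)
      = (ContinuousLinearMap.proj 0 : (Fin (d+1) → ℝ) →L[ℝ] ℝ) := rfl
  rw [h, ContinuousLinearMap.fderiv]
  simp [Pi.single_apply, eq_comm]

end CALC

section DG
variable {d : ℕ} {u : (Fin (d + 1) → ℝ) → ℝ} {σ : (Fin d → ℝ) → Matrix (Fin d) (Fin d) ℝ}

lemma diff_tail_entry (hσsmooth : ∀ a b, ContDiff ℝ (⊤ : ℕ∞) fun θ => σ θ a b) (a b : Fin d)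
    (x : Fin (d+1) → ℝ) : DifferentiableAt ℝ (fun y => σ (Fin.tail y) a b) x := by
  have h1 : (fun y : Fin (d+1) → ℝ => σ (Fin.tail y) a b)
      = (fun θ => σ θ a b) ∘ (tailCLM d) := rfl
  rw [h1]
  exact (((hσsmooth a b).differentiable (by simp)) _).comp x (tailCLM d).differentiableAt

lemma diff_coord0sq {x : Fin (d+1) → ℝ} :
    DifferentiableAt ℝ (fun y : Fin (d+1) → ℝ => (y 0) ^ 2) x := by
  have h : DifferentiableAt ℝ (fun y : Fin (d+1) → ℝ => y 0) x :=
    (ContinuousLinearMap.proj 0 : (Fin (d+1) → ℝ) →L[ℝ] ℝ).differentiableAt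
  exact h.pow 2

lemma pderiv'_coord0sq (i : Fin (d+1)) (x : Fin (d+1) → ℝ) :
    pderiv' i (fun y : Fin (d+1) → ℝ => (y 0) ^ 2) x
      = 2 * x 0 * (if i = 0 then 1 else 0) := by
  have hd : DifferentiableAt ℝ (fun y : Fin (d+1) → ℝ => y 0) x :=
    (ContinuousLinearMap.proj 0 : (Fin (d+1) → ℝ) →L[ℝ] ℝ).differentiableAt
  rw [pderiv'_sq hd, pderiv'_coord0]

lemma DG00 (hu : ContDiff ℝ (⊤ : ℕ∞) u) (i : Fin (d+1)) (x) :
    pderiv' i (fun y => quasiSphericalMetric d u σ y 0 0) x = 2 * u x * pderiv' i u x := by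
  have h : (fun y => quasiSphericalMetric d u σ y 0 0) = fun y => u y ^ 2 := by
    funext y; exact qs_00 u σ y
  rw [h, pderiv'_sq ((hu.differentiable (by simp)) x)]

lemma DG0s (i : Fin (d+1)) (b : Fin d) (x) :
    pderiv' i (fun y => quasiSphericalMetric d u σ y 0 b.succ) x = 0 := by
  have h : (fun y => quasiSphericalMetric d u σ y 0 b.succ) = fun _ => (0:ℝ) := by
    funext y; exact qs_0s u σ y b
  rw [h, pderiv'_const]

lemma DGs0 (i : Fin (d+1)) (b : Fin d) (x) :
    pderiv' i (fun y => quasiSphericalMetric d u σ y b.succ 0) x = 0 := by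
  have h : (fun y => quasiSphericalMetric d u σ y b.succ 0) = fun _ => (0:ℝ) := by
    funext y; exact qs_s0 u σ y b
  rw [h, pderiv'_const]

lemma DGss_fun : (fun y => quasiSphericalMetric d u σ y a.succ b.succ)
    = fun y => (y 0) ^ 2 * σ (Fin.tail y) a b := by
  funext y; exact qs_ss u σ y a b

lemma DGss0 (hσsmooth : ∀ a b, ContDiff ℝ (⊤ : ℕ∞) fun θ => σ θ a b) (a b : Fin d) (x) :
    pderiv' 0 (fun y => quasiSphericalMetric d u σ y a.succ b.succ) x
      = 2 * x 0 * σ (Fin.tail x) a b := by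
  rw [DGss_fun, pderiv'_mul diff_coord0sq (diff_tail_entry hσsmooth a b x),
    pderiv'_tail_zero _ _ (((hσsmooth a b).differentiable (by simp)) _),
    pderiv'_coord0sq]
  simp [mul_comm]

lemma DGss_succ (hσsmooth : ∀ a b, ContDiff ℝ (⊤ : ℕ∞) fun θ => σ θ a b) (a b c : Fin d) (x) :
    pderiv' c.succ (fun y => quasiSphericalMetric d u σ y a.succ b.succ) x
      = (x 0) ^ 2 * pderiv' c (fun θ => σ θ a b) (Fin.tail x) := by
  rw [DGss_fun, pderiv'_mul diff_coord0sq (diff_tail_entry hσsmooth a b x),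
    pderiv'_tail_succ _ _ (((hσsmooth a b).differentiable (by simp)) _),
    pderiv'_coord0sq]
  simp [Fin.succ_ne_zero c]
end DG

section GAMMA
variable {d : ℕ} {u : (Fin (d + 1) → ℝ) → ℝ} {σ : (Fin d → ℝ) → Matrix (Fin d) (Fin d) ℝ}
variable {x : Fin (d+1) → ℝ}

lemma Christoffel_symm {m : ℕ} {G : (Fin m → ℝ) → Matrix (Fin m) (Fin m) ℝ}
    (hG : ∀ y i j, G y i j = G y j i) (k i j : Fin m) (y : Fin m → ℝ) :
    Christoffel G k i j y = Christoffel G k j i y := by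
  unfold Christoffel
  congr 1
  apply Finset.sum_congr rfl
  intro l _
  have h : (fun z => G z i j) = (fun z => G z j i) := by funext z; exact hG z i j
  rw [h]
  ring

lemma Γ000 (hσsmooth : ∀ a b, ContDiff ℝ (⊤ : ℕ∞) fun θ => σ θ a b)
    (hσinv : ∀ θ, IsUnit (σ θ).det) (hu : ContDiff ℝ (⊤ : ℕ∞) u) (hupos : ∀ x, 0 < u x)
    (hx : 0 < x 0) :
    Christoffel (quasiSphericalMetric d u σ) 0 0 0 x = pderiv' 0 u x / u x := by
  unfold Christoffel
  rw [qs_inv_eq u σ hσinv x hx.ne' (hupos x).ne', Fin.sum_univ_succ]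
  simp only [qsInv_00, qsInv_0s, DG00 hu, zero_mul, Finset.sum_const_zero, add_zero]
  have h := (hupos x).ne'
  field_simp
  ring

lemma Γ00s (hσsmooth : ∀ a b, ContDiff ℝ (⊤ : ℕ∞) fun θ => σ θ a b)
    (hσinv : ∀ θ, IsUnit (σ θ).det) (hu : ContDiff ℝ (⊤ : ℕ∞) u) (hupos : ∀ x, 0 < u x)
    (hx : 0 < x 0) (a : Fin d) :
    Christoffel (quasiSphericalMetric d u σ) 0 0 a.succ x = pderiv' a.succ u x / u x := by
  unfold Christoffel
  rw [qs_inv_eq u σ hσinv x hx.ne' (hupos x).ne', Fin.sum_univ_succ]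
  simp only [qsInv_00, qsInv_0s, DG00 hu, DG0s, zero_mul, Finset.sum_const_zero,
    add_zero, zero_add, sub_zero]
  have h := (hupos x).ne'
  field_simp

lemma Γ0ss (hσsmooth : ∀ a b, ContDiff ℝ (⊤ : ℕ∞) fun θ => σ θ a b)
    (hσinv : ∀ θ, IsUnit (σ θ).det) (hu : ContDiff ℝ (⊤ : ℕ∞) u) (hupos : ∀ x, 0 < u x)
    (hx : 0 < x 0) (a b : Fin d) :
    Christoffel (quasiSphericalMetric d u σ) 0 a.succ b.succ x
      = -(x 0) * σ (Fin.tail x) a b / u x ^ 2 := by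
  unfold Christoffel
  rw [qs_inv_eq u σ hσinv x hx.ne' (hupos x).ne', Fin.sum_univ_succ]
  simp only [qsInv_00, qsInv_0s, DG0s, DGss0 hσsmooth, zero_mul, Finset.sum_const_zero,
    add_zero, zero_add, zero_sub]
  have h := (hupos x).ne'
  field_simp

lemma Γs00 (hσsmooth : ∀ a b, ContDiff ℝ (⊤ : ℕ∞) fun θ => σ θ a b)
    (hσinv : ∀ θ, IsUnit (σ θ).det) (hu : ContDiff ℝ (⊤ : ℕ∞) u) (hupos : ∀ x, 0 < u x)
    (hx : 0 < x 0) (c : Fin d) :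
    Christoffel (quasiSphericalMetric d u σ) c.succ 0 0 x
      = -(u x) * ((x 0) ^ 2)⁻¹ * ∑ b, (σ (Fin.tail x))⁻¹ c b * pderiv' b.succ u x := by
  unfold Christoffel
  rw [qs_inv_eq u σ hσinv x hx.ne' (hupos x).ne', Fin.sum_univ_succ]
  simp only [qsInv_s0, qsInv_ss, DG00 hu, DGs0, zero_mul, zero_add, add_zero, zero_sub]
  have hterm : ∀ b, ((x 0)^2)⁻¹ * (σ (Fin.tail x))⁻¹ c b * (-(2 * u x * pderiv' b.succ u x))
      = (-2 * u x * ((x 0)^2)⁻¹) * ((σ (Fin.tail x))⁻¹ c b * pderiv' b.succ u x) := by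
    intro b; ring
  simp only [hterm, ← Finset.mul_sum]
  ring

lemma Γs0s (hσsmooth : ∀ a b, ContDiff ℝ (⊤ : ℕ∞) fun θ => σ θ a b)
    (hσinv : ∀ θ, IsUnit (σ θ).det) (hu : ContDiff ℝ (⊤ : ℕ∞) u) (hupos : ∀ x, 0 < u x)
    (hx : 0 < x 0) (c b : Fin d) :
    Christoffel (quasiSphericalMetric d u σ) c.succ 0 b.succ x
      = (x 0)⁻¹ * (if c = b then 1 else 0) := by
  unfold Christoffel
  rw [qs_inv_eq u σ hσinv x hx.ne' (hupos x).ne', Fin.sum_univ_succ]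
  simp only [qsInv_s0, qsInv_ss, DG0s, DGs0, DGss0 hσsmooth, zero_mul, zero_add,
    add_zero, sub_zero]
  have hterm : ∀ e, ((x 0)^2)⁻¹ * (σ (Fin.tail x))⁻¹ c e * (2 * x 0 * σ (Fin.tail x) e b)
      = (2 * ((x 0)^2)⁻¹ * x 0) * ((σ (Fin.tail x))⁻¹ c e * σ (Fin.tail x) e b) := by
    intro e; ring
  simp only [hterm, ← Finset.mul_sum, ← Matrix.mul_apply,
    Matrix.nonsing_inv_mul _ (hσinv _), Matrix.one_apply]
  have hx0 := hx.ne'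
  split_ifs <;> field_simp <;> ring

lemma Γsss (hσsmooth : ∀ a b, ContDiff ℝ (⊤ : ℕ∞) fun θ => σ θ a b)
    (hσinv : ∀ θ, IsUnit (σ θ).det) (hu : ContDiff ℝ (⊤ : ℕ∞) u) (hupos : ∀ x, 0 < u x)
    (hx : 0 < x 0) (c a b : Fin d) :
    Christoffel (quasiSphericalMetric d u σ) c.succ a.succ b.succ x
      = Christoffel σ c a b (Fin.tail x) := by
  unfold Christoffel
  rw [qs_inv_eq u σ hσinv x hx.ne' (hupos x).ne', Fin.sum_univ_succ]
  simp only [qsInv_s0, qsInv_ss, DGs0, DGss_succ hσsmooth, zero_mul, zero_add, add_zero,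
    sub_zero]
  congr 1
  apply Finset.sum_congr rfl
  intro e _
  have hx0 := hx.ne'
  field_simp
end GAMMA

section DGAMMA
variable {d : ℕ} {u : (Fin (d + 1) → ℝ) → ℝ} {σ : (Fin d → ℝ) → Matrix (Fin d) (Fin d) ℝ}
variable {x : Fin (d+1) → ℝ}

lemma pderiv'_comm {m : ℕ} {f : (Fin m → ℝ) → ℝ} (hf : ContDiff ℝ (⊤ : ℕ∞) f) (i j : Fin m)
    (x : Fin m → ℝ) :
    pderiv' i (pderiv' j f) x = pderiv' j (pderiv' i f) x := by
  have h1 : ∀ y, HasFDerivAt f (fderiv ℝ f y) y := fun y =>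
    ((hf.differentiable (by simp)) y).hasFDerivAt
  have hf' : DifferentiableAt ℝ (fderiv ℝ f) x :=
    ((hf.fderiv_right (m := (⊤ : ℕ∞)) (le_refl _)).differentiable (by simp)) x
  have key : ∀ v w, fderiv ℝ (fderiv ℝ f) x v w = fderiv ℝ (fderiv ℝ f) x w v :=
    second_derivative_symmetric h1 hf'.hasFDerivAt
  have happ : ∀ (j i : Fin m), pderiv' i (pderiv' j f) x
      = fderiv ℝ (fderiv ℝ f) x (Pi.single i 1) (Pi.single j 1) := by
    intro j i
    unfold pderiv'
    rw [fderiv_clm_apply hf' (differentiableAt_const (Pi.single j 1 : Fin m → ℝ))]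
    simp
  rw [happ, happ, key]

lemma ev_pos (hx : 0 < x 0) : ∀ᶠ y in nhds x, 0 < y 0 :=
  (isOpen_lt continuous_const (continuous_apply 0)).mem_nhds hx

lemma pderiv'_invcoord_mul_const (hx : 0 < x 0) (c : ℝ) (i : Fin d) :
    pderiv' i.succ (fun y : Fin (d+1) → ℝ => (y 0)⁻¹ * c) x = 0 := by
  have hdiff : DifferentiableAt ℝ (fun y : Fin (d+1) → ℝ => y 0) x :=
    (ContinuousLinearMap.proj 0 : (Fin (d+1) → ℝ) →L[ℝ] ℝ).differentiableAt
  rw [pderiv'_mul (f := fun y => (y 0)⁻¹) (hdiff.inv hx.ne') (differentiableAt_const c), pderiv'_const,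
    pderiv'_inv (f := fun y : Fin (d+1) → ℝ => y 0) hdiff hx.ne', pderiv'_coord0]
  simp [Fin.succ_ne_zero]

variable (hσsmooth : ∀ a b, ContDiff ℝ (⊤ : ℕ∞) fun θ => σ θ a b)
variable (hσinv : ∀ θ, IsUnit (σ θ).det)
variable (hu : ContDiff ℝ (⊤ : ℕ∞) u) (hupos : ∀ x, 0 < u x)

lemma pderiv_Γ00s (hσsmooth : ∀ a b, ContDiff ℝ (⊤ : ℕ∞) fun θ => σ θ a b)
    (hσinv : ∀ θ, IsUnit (σ θ).det) (hu : ContDiff ℝ (⊤ : ℕ∞) u) (hupos : ∀ x, 0 < u x)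
    (hx : 0 < x 0) (a : Fin d) :
    pderiv' 0 (Christoffel (quasiSphericalMetric d u σ) 0 0 a.succ) x
      = (pderiv' 0 (pderiv' a.succ u) x * u x
          - pderiv' a.succ u x * pderiv' 0 u x) / u x ^ 2 := by
  have hev : Christoffel (quasiSphericalMetric d u σ) 0 0 a.succ
      =ᶠ[nhds x] fun y => pderiv' a.succ u y / u y := by
    filter_upwards [ev_pos hx] with y hy
    exact Γ00s hσsmooth hσinv hu hupos hy a
  rw [pderiv'_congr_nhds hev,
    pderiv'_div ((contDiff_pderiv' hu a.succ).differentiable (by simp) x)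
      ((hu.differentiable (by simp)) x) (hupos x).ne' 0]

lemma pderiv_Γ000 (hσsmooth : ∀ a b, ContDiff ℝ (⊤ : ℕ∞) fun θ => σ θ a b)
    (hσinv : ∀ θ, IsUnit (σ θ).det) (hu : ContDiff ℝ (⊤ : ℕ∞) u) (hupos : ∀ x, 0 < u x)
    (hx : 0 < x 0) (a : Fin d) :
    pderiv' a.succ (Christoffel (quasiSphericalMetric d u σ) 0 0 0) x
      = (pderiv' a.succ (pderiv' 0 u) x * u x
          - pderiv' 0 u x * pderiv' a.succ u x) / u x ^ 2 := by
  have hev : Christoffel (quasiSphericalMetric d u σ) 0 0 0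
      =ᶠ[nhds x] fun y => pderiv' 0 u y / u y := by
    filter_upwards [ev_pos hx] with y hy
    exact Γ000 hσsmooth hσinv hu hupos hy
  rw [pderiv'_congr_nhds hev,
    pderiv'_div ((contDiff_pderiv' hu 0).differentiable (by simp) x)
      ((hu.differentiable (by simp)) x) (hupos x).ne' a.succ]

lemma pderiv_Γs0s (hσsmooth : ∀ a b, ContDiff ℝ (⊤ : ℕ∞) fun θ => σ θ a b)
    (hσinv : ∀ θ, IsUnit (σ θ).det) (hu : ContDiff ℝ (⊤ : ℕ∞) u) (hupos : ∀ x, 0 < u x)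
    (hx : 0 < x 0) (b a : Fin d) (i : Fin d) :
    pderiv' i.succ (Christoffel (quasiSphericalMetric d u σ) b.succ 0 a.succ) x = 0 := by
  have hev : Christoffel (quasiSphericalMetric d u σ) b.succ 0 a.succ
      =ᶠ[nhds x] fun y => (y 0)⁻¹ * (if b = a then 1 else 0) := by
    filter_upwards [ev_pos hx] with y hy
    exact Γs0s hσsmooth hσinv hu hupos hy b a
  rw [pderiv'_congr_nhds hev, pderiv'_invcoord_mul_const hx]

lemma qs_symm (hσsym : ∀ θ, (σ θ).IsSymm) (y : Fin (d+1) → ℝ) (i j : Fin (d+1)) :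
    quasiSphericalMetric d u σ y i j = quasiSphericalMetric d u σ y j i := by
  induction i using Fin.cases with
  | zero => induction j using Fin.cases with
    | zero => rfl
    | succ j => rw [qs_0s, qs_s0]
  | succ i => induction j using Fin.cases with
    | zero => rw [qs_0s, qs_s0]
    | succ j => rw [qs_ss, qs_ss, (hσsym _).apply]

lemma pderiv_Γss0 (hσsym : ∀ θ, (σ θ).IsSymm)
    (hσsmooth : ∀ a b, ContDiff ℝ (⊤ : ℕ∞) fun θ => σ θ a b)
    (hσinv : ∀ θ, IsUnit (σ θ).det) (hu : ContDiff ℝ (⊤ : ℕ∞) u) (hupos : ∀ x, 0 < u x)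
    (hx : 0 < x 0) (b : Fin d) (i : Fin d) :
    pderiv' i.succ (Christoffel (quasiSphericalMetric d u σ) b.succ b.succ 0) x = 0 := by
  have hev : Christoffel (quasiSphericalMetric d u σ) b.succ b.succ 0
      =ᶠ[nhds x] fun y => (y 0)⁻¹ * (if b = b then 1 else 0) := by
    filter_upwards [ev_pos hx] with y hy
    rw [Christoffel_symm (qs_symm hσsym) b.succ b.succ 0 y]
    exact Γs0s hσsmooth hσinv hu hupos hy b b
  rw [pderiv'_congr_nhds hev, pderiv'_invcoord_mul_const hx]

lemma sum_inv_contract (hσinv : ∀ θ, IsUnit (σ θ).det) (θ : Fin d → ℝ)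
    (v : Fin d → ℝ) (a : Fin d) :
    ∑ c, σ θ a c * ∑ e, (σ θ)⁻¹ c e * v e = v a := by
  simp only [Finset.mul_sum]
  rw [Finset.sum_comm]
  have h : ∀ e, ∑ c, σ θ a c * ((σ θ)⁻¹ c e * v e) = (σ θ * (σ θ)⁻¹) a e * v e := by
    intro e; rw [Matrix.mul_apply, Finset.sum_mul]
    apply Finset.sum_congr rfl; intros; ring
  simp only [h, Matrix.mul_nonsing_inv _ (hσinv θ), Matrix.one_apply, ite_mul, one_mul,
    zero_mul, Finset.sum_ite_eq, Finset.mem_univ, if_true]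
end DGAMMA


theorem quasiSpherical_mixed_Ricci
    (d : ℕ) (hd : 2 ≤ d)
    (σ : (Fin d → ℝ) → Matrix (Fin d) (Fin d) ℝ)
    (hσsym : ∀ θ, (σ θ).IsSymm)
    (hσsmooth : ∀ a b, ContDiff ℝ (⊤ : ℕ∞) fun θ => σ θ a b)
    (hσinv : ∀ θ, IsUnit (σ θ).det)
    (hσround : ∀ θ a b, RicciC σ a b θ = ((d : ℝ) - 1) * σ θ a b)
    (u : (Fin (d + 1) → ℝ) → ℝ) (hu : ContDiff ℝ (⊤ : ℕ∞) u) (hupos : ∀ x, 0 < u x) :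
    ∀ x : Fin (d + 1) → ℝ, 0 < x 0 → ∀ a : Fin d,
      (u x)⁻¹ * RicciC (quasiSphericalMetric d u σ) 0 a.succ x
        = (((d : ℝ) - 1) / (x 0)) * ((u x)⁻¹) ^ 2 * pderiv' a.succ u x := by
  intro x hx a
  set Gm := quasiSphericalMetric d u σ with hGm
  have hU : u x ≠ 0 := (hupos x).ne'
  have hx0 : x 0 ≠ 0 := hx.ne'
  have hσ' : ∀ y i j, σ y i j = σ y j i := fun y i j => (hσsym y).apply j i
  set U := u x with hUdef
  set U0 := pderiv' 0 u x with hU0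
  set Ua := pderiv' a.succ u x with hUa
  set Sσ := ∑ b, Christoffel σ b b a (Fin.tail x) with hSσ
  -- Sum 1
  have hS1 : (∑ k, pderiv' k (Christoffel Gm k 0 a.succ) x)
      = (pderiv' 0 (pderiv' a.succ u) x * U - Ua * U0) / U ^ 2 := by
    rw [Fin.sum_univ_succ, pderiv_Γ00s hσsmooth hσinv hu hupos hx a]
    have hz : ∀ b : Fin d, pderiv' b.succ (Christoffel Gm b.succ 0 a.succ) x = 0 :=
      fun b => pderiv_Γs0s hσsmooth hσinv hu hupos hx b a b
    simp [hz]
    rfl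
  -- Sum 2
  have hS2 : (∑ k, pderiv' a.succ (Christoffel Gm k k 0) x)
      = (pderiv' a.succ (pderiv' 0 u) x * U - U0 * Ua) / U ^ 2 := by
    rw [Fin.sum_univ_succ, pderiv_Γ000 hσsmooth hσinv hu hupos hx a]
    have hz : ∀ b : Fin d, pderiv' a.succ (Christoffel Gm b.succ b.succ 0) x = 0 :=
      fun b => pderiv_Γss0 hσsym hσsmooth hσinv hu hupos hx b a
    simp [hz]
    rfl
  have Γss0v : ∀ c b : Fin d, Christoffel Gm c.succ b.succ 0 x
      = (x 0)⁻¹ * (if c = b then 1 else 0) := by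
    intro c b
    rw [Christoffel_symm (qs_symm hσsym) c.succ b.succ 0 x]
    exact Γs0s hσsmooth hσinv hu hupos hx c b
  have Γ0s0v : ∀ b : Fin d, Christoffel Gm 0 b.succ 0 x = pderiv' b.succ u x / U := by
    intro b
    rw [Christoffel_symm (qs_symm hσsym) 0 b.succ 0 x]
    exact Γ00s hσsmooth hσinv hu hupos hx b
  -- Sum 3
  have hS3 : (∑ k, ∑ l, Christoffel Gm k k l x * Christoffel Gm l 0 a.succ x)
      = U0 / U * (Ua / U) + (x 0)⁻¹ * (Ua / U)
        + (d : ℝ) * ((x 0)⁻¹ * (Ua / U)) + (x 0)⁻¹ * Sσ := by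
    rw [Fin.sum_univ_succ]
    have hA : (∑ l, Christoffel Gm 0 0 l x * Christoffel Gm l 0 a.succ x)
        = U0 / U * (Ua / U) + (x 0)⁻¹ * (Ua / U) := by
      rw [Fin.sum_univ_succ, Γ000 hσsmooth hσinv hu hupos hx,
        Γ00s hσsmooth hσinv hu hupos hx a]
      have h1 : ∀ c : Fin d, Christoffel Gm 0 0 c.succ x * Christoffel Gm c.succ 0 a.succ x
          = if c = a then (x 0)⁻¹ * (Ua / U) else 0 := by
        intro c
        rw [Γ00s hσsmooth hσinv hu hupos hx c, Γs0s hσsmooth hσinv hu hupos hx c a]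
        by_cases h : c = a
        · subst h; simp; ring
        · simp [h]
      rw [Finset.sum_congr rfl (fun c _ => h1 c)]
      simp
      rfl
    have hB : ∀ b : Fin d, (∑ l, Christoffel Gm b.succ b.succ l x * Christoffel Gm l 0 a.succ x)
        = (x 0)⁻¹ * (Ua / U) + (x 0)⁻¹ * Christoffel σ b b a (Fin.tail x) := by
      intro b
      rw [Fin.sum_univ_succ, Γss0v b b, Γ00s hσsmooth hσinv hu hupos hx a]
      have h1 : ∀ c : Fin d, Christoffel Gm b.succ b.succ c.succ x
            * Christoffel Gm c.succ 0 a.succ x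
          = if c = a then (x 0)⁻¹ * Christoffel σ b b a (Fin.tail x) else 0 := by
        intro c
        rw [Γsss hσsmooth hσinv hu hupos hx b b c, Γs0s hσsmooth hσinv hu hupos hx c a]
        by_cases h : c = a
        · subst h; simp; ring
        · simp [h]
      rw [Finset.sum_congr rfl (fun c _ => h1 c)]
      simp
      left; rfl
    rw [hA, Finset.sum_congr rfl (fun b _ => hB b), Finset.sum_add_distrib,
      Finset.sum_const, ← Finset.mul_sum, ← hSσ]
    simp only [Finset.card_univ, Fintype.card_fin, nsmul_eq_mul]
    ring
  -- Sum 4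
  have hS4 : (∑ k, ∑ l, Christoffel Gm k a.succ l x * Christoffel Gm l k 0 x)
      = Ua / U * (U0 / U) + (x 0)⁻¹ * U⁻¹ * Ua
        + (x 0)⁻¹ * (Ua / U) + (x 0)⁻¹ * Sσ := by
    rw [Fin.sum_univ_succ]
    have hA : (∑ l, Christoffel Gm 0 a.succ l x * Christoffel Gm l 0 0 x)
        = Ua / U * (U0 / U) + (x 0)⁻¹ * U⁻¹ * Ua := by
      rw [Fin.sum_univ_succ, Γ0s0v a, Γ000 hσsmooth hσinv hu hupos hx]
      have h1 : ∀ c : Fin d, Christoffel Gm 0 a.succ c.succ x * Christoffel Gm c.succ 0 0 x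
          = (x 0)⁻¹ * U⁻¹ * (σ (Fin.tail x) a c
              * ∑ e, (σ (Fin.tail x))⁻¹ c e * pderiv' e.succ u x) := by
        intro c
        rw [Γ0ss hσsmooth hσinv hu hupos hx a c, Γs00 hσsmooth hσinv hu hupos hx c]
        field_simp
        rw [← hUdef]
        ring
        rw [mul_assoc, mul_inv_cancel₀ hU, mul_one]
      rw [Finset.sum_congr rfl (fun c _ => h1 c), ← Finset.mul_sum,
        sum_inv_contract hσinv]
    have hB : ∀ b : Fin d, (∑ l, Christoffel Gm b.succ a.succ l x * Christoffel Gm l b.succ 0 x)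
        = (if b = a then (x 0)⁻¹ * (Ua / U) else 0)
          + (x 0)⁻¹ * Christoffel σ b b a (Fin.tail x) := by
      intro b
      rw [Fin.sum_univ_succ, Γss0v b a, Γ0s0v b]
      have h1 : ∀ c : Fin d, Christoffel Gm b.succ a.succ c.succ x
            * Christoffel Gm c.succ b.succ 0 x
          = if c = b then (x 0)⁻¹ * Christoffel σ b a c (Fin.tail x) else 0 := by
        intro c
        rw [Γsss hσsmooth hσinv hu hupos hx b a c, Γss0v c b]
        by_cases h : c = b
        · subst h; simp; ring
        · simp [h]
      rw [Finset.sum_congr rfl (fun c _ => h1 c)]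
      simp only [Finset.sum_ite_eq', Finset.mem_univ, if_true]
      rw [Christoffel_symm hσ' b a b (Fin.tail x)]
      by_cases h : b = a
      · subst h; simp; left; rfl
      · simp [h]
    rw [hA, Finset.sum_congr rfl (fun b _ => hB b), Finset.sum_add_distrib,
      ← Finset.mul_sum, ← hSσ]
    simp only [Finset.sum_ite_eq', Finset.mem_univ, if_true]
    ring
  -- assemble
  have hsymm : pderiv' a.succ (pderiv' 0 u) x = pderiv' 0 (pderiv' a.succ u) x :=
    pderiv'_comm hu a.succ 0 x
  unfold RicciC
  rw [hS1, hS2, hS3, hS4, hsymm]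
  field_simp
  ring
end

section
/- Let u(r) = (1 − 2m₀ r^{2-n})^{-1/2} on (r₁,∞) and suppose V(r) solves the ODE V'' − u^{-1} u' V' = ((n-1)(n-2)/(2r²))(1 − u²) V with V = 1 + o(1) and V' = o(1/r) as r → ∞. Then V(r) = √(1 − 2m₀ r^{2-n}). -/
/-!
With `A r = 1 - 2 m₀ r^(2-n)` we have `u = A^(-1/2)`, so `u⁻¹ u' = -A'/(2A)` and
`1 - u² = 1 - A⁻¹`; multiplied by `A`, the equation becomes `A V'' + (A'/2) V' = (A''/2) V`,
which `√A` also solves. The weighted Wronskian `√A · W(V, √A) = V A'/2 - V' A` of the two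
solutions is therefore constant, and it tends to `0` at infinity, so `V' A = V A'/2`.
This says `(V u)' = 0`, and `V u → 1` forces `V = u⁻¹ = √A`.
-/

open Filter Topology

theorem eq_of_hasDerivAt_zero_of_tendsto {E : Type*} [NormedAddCommGroup E] [NormedSpace ℝ E]
    {f : ℝ → E} {a : ℝ} {c : E} (hf : ∀ x, a < x → HasDerivAt f 0 x)
    (hc : Tendsto f atTop (𝓝 c)) : ∀ x, a < x → f x = c := by
  obtain ⟨b, hb⟩ := isOpen_Ioi.exists_is_const_of_deriv_eq_zero isPreconnected_Ioi
    (fun x hx => (hf x hx).differentiableAt.differentiableWithinAt)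
    (fun x hx => (hf x hx).deriv)
  have hfb : Tendsto f atTop (𝓝 b) :=
    tendsto_const_nhds.congr' <| (eventually_gt_atTop a).mono fun x hx => (hb x hx).symm
  intro x hx
  rw [hb x hx, tendsto_nhds_unique hfb hc]

theorem hasDerivAt_weightedWronskian {A A' V V' : ℝ → ℝ} {a'' v'' x : ℝ}
    (hA : HasDerivAt A (A' x) x) (hA' : HasDerivAt A' a'' x)
    (hV : HasDerivAt V (V' x) x) (hV' : HasDerivAt V' v'' x)
    (hode : A x * v'' + A' x / 2 * V' x = a'' / 2 * V x) :
    HasDerivAt (fun r => V r * A' r / 2 - V' r * A r) 0 x := by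
  refine (((hV.mul hA').div_const 2).sub (hV'.mul hA)).congr_deriv ?_
  linear_combination -hode

theorem hasDerivAt_rpow_neg_half {A : ℝ → ℝ} {a x : ℝ} (hA : HasDerivAt A a x)
    (hpos : 0 < A x) :
    HasDerivAt (fun r => A r ^ (-(1 / 2) : ℝ)) (-(a / (2 * A x)) * A x ^ (-(1 / 2) : ℝ)) x := by
  refine (hA.rpow_const (p := -(1 / 2)) (Or.inl hpos.ne')).congr_deriv ?_
  rw [Real.rpow_sub hpos, Real.rpow_one]
  field_simp

theorem rpow_neg_half_eq_inv_sqrt {x : ℝ} (hx : 0 ≤ x) :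
    x ^ (-(1 / 2) : ℝ) = (√x)⁻¹ := by
  rw [Real.rpow_neg hx, Real.sqrt_eq_rpow]

theorem mul_add_half_mul_eq_of_ode_rpow_neg_half {A : ℝ → ℝ} {a a'' c v v' v'' x : ℝ}
    (hA : HasDerivAt A a x) (hpos : 0 < A x) (hc : c * (A x - 1) = a'' / 2)
    (hode : v'' - (A x ^ (-(1 / 2) : ℝ))⁻¹ * deriv (fun r => A r ^ (-(1 / 2) : ℝ)) x * v'
      = c * (1 - (A x ^ (-(1 / 2) : ℝ)) ^ 2) * v) :
    A x * v'' + a / 2 * v' = a'' / 2 * v := by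
  rw [(hasDerivAt_rpow_neg_half hA hpos).deriv, rpow_neg_half_eq_inv_sqrt hpos.le, inv_pow,
    Real.sq_sqrt hpos.le] at hode
  have hA0 := hpos.ne'
  rw [← hc]
  field_simp at hode ⊢
  linear_combination hode

theorem hasDerivAt_mul_rpow_neg_half_eq_zero {A V : ℝ → ℝ} {a v x : ℝ}
    (hA : HasDerivAt A a x) (hV : HasDerivAt V v x) (hpos : 0 < A x)
    (hW : V x * a / 2 - v * A x = 0) :
    HasDerivAt (fun r => V r * A r ^ (-(1 / 2) : ℝ)) 0 x := by
  refine (hV.mul (hasDerivAt_rpow_neg_half hA hpos)).congr_deriv ?_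
  have hA0 := hpos.ne'
  field_simp
  linear_combination (-2 * A x ^ (-(1 / 2) : ℝ)) * hW

theorem hasDerivAt_one_sub_mul_rpow (m p : ℝ) {r : ℝ} (hr : 0 < r) :
    HasDerivAt (fun r => 1 - 2 * m * r ^ p) (-(2 * m * p) * r ^ (p - 1)) r := by
  refine (((Real.hasDerivAt_rpow_const (p := p) (Or.inl hr.ne')).const_mul (2 * m)).const_sub
    1).congr_deriv ?_
  ring

theorem hasDerivAt_mul_rpow_sub_one (m p : ℝ) {r : ℝ} (hr : 0 < r) :
    HasDerivAt (fun r => -(2 * m * p) * r ^ (p - 1))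
      (-(2 * m * p * (p - 1)) * r ^ (p - 2)) r := by
  refine ((Real.hasDerivAt_rpow_const (p := p - 1) (Or.inl hr.ne')).const_mul
    (-(2 * m * p))).congr_deriv ?_
  rw [show p - 1 - 1 = p - 2 by ring]
  ring

theorem mul_one_sub_mul_rpow_sub_one {m p r : ℝ} (hr : 0 < r) :
    p * (p - 1) / (2 * r ^ 2) * (1 - 2 * m * r ^ p - 1)
      = -(2 * m * p * (p - 1)) * r ^ (p - 2) / 2 := by
  rw [Real.rpow_sub hr, Real.rpow_two]
  field_simp
  ring

theorem tendsto_one_sub_mul_rpow (m : ℝ) {p : ℝ} (hp : p < 0) :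
    Tendsto (fun r : ℝ => 1 - 2 * m * r ^ p) atTop (𝓝 1) := by
  have h := (tendsto_rpow_neg_atTop (neg_pos.2 hp)).const_mul (2 * m)
  simpa using h.const_sub 1

theorem tendsto_mul_rpow_sub_one (m : ℝ) {p : ℝ} (hp : p < 1) :
    Tendsto (fun r : ℝ => -(2 * m * p) * r ^ (p - 1)) atTop (𝓝 0) := by
  have h := (tendsto_rpow_neg_atTop (neg_pos.2 (sub_neg.2 hp))).const_mul (-(2 * m * p))
  simpa using h

/-- With `u(r) = (1 − 2m₀ r^{2−n})^{−1/2}`, any solution `V` of the ODE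
`V'' − u⁻¹ u' V' = ((n−1)(n−2)/(2r²))(1 − u²) V` with `V = 1 + o(1)` and `V' = o(1/r)`
as `r → ∞` equals `√(1 − 2m₀ r^{2−n})`. -/
theorem static_potential_ODE_uniqueness
    (n : ℕ) (hn : 3 ≤ n) (m₀ r₁ : ℝ) (hr₁ : 0 < r₁)
    (hdef : ∀ r : ℝ, r₁ < r → 0 < 1 - 2 * m₀ * r ^ ((2 : ℝ) - n))
    (u : ℝ → ℝ) (hu : ∀ r : ℝ, u r = (1 - 2 * m₀ * r ^ ((2 : ℝ) - n)) ^ (-(1/2) : ℝ))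
    (V V' V'' : ℝ → ℝ)
    (hV' : ∀ r : ℝ, r₁ < r → HasDerivAt V (V' r) r)
    (hV'' : ∀ r : ℝ, r₁ < r → HasDerivAt V' (V'' r) r)
    (hode : ∀ r : ℝ, r₁ < r →
      V'' r - (u r)⁻¹ * deriv u r * V' r
        = (((n : ℝ) - 1) * ((n : ℝ) - 2) / (2 * r ^ 2)) * (1 - (u r) ^ 2) * V r)
    (hlim : Filter.Tendsto V Filter.atTop (nhds 1))
    (hlim' : V' =o[Filter.atTop] fun r : ℝ => 1 / r) :
    ∀ r : ℝ, r₁ < r → V r = Real.sqrt (1 - 2 * m₀ * r ^ ((2 : ℝ) - n)) := by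
  set p : ℝ := 2 - n with hp_def
  have hp : p < 0 := by
    have : (3 : ℝ) ≤ n := mod_cast hn
    linarith
  set A : ℝ → ℝ := fun r => 1 - 2 * m₀ * r ^ p
  set A' : ℝ → ℝ := fun r => -(2 * m₀ * p) * r ^ (p - 1)
  set A'' : ℝ → ℝ := fun r => -(2 * m₀ * p * (p - 1)) * r ^ (p - 2)
  obtain rfl : u = fun r => A r ^ (-(1 / 2) : ℝ) := funext hu
  have hA (r) (hr : r₁ < r) : HasDerivAt A (A' r) r :=
    hasDerivAt_one_sub_mul_rpow m₀ p (hr₁.trans hr)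
  have hA' (r) (hr : r₁ < r) : HasDerivAt A' (A'' r) r :=
    hasDerivAt_mul_rpow_sub_one m₀ p (hr₁.trans hr)
  have hode' (r) (hr : r₁ < r) : A r * V'' r + A' r / 2 * V' r = A'' r / 2 * V r := by
    refine mul_add_half_mul_eq_of_ode_rpow_neg_half (hA r hr) (hdef r hr) ?_ (hode r hr)
    rw [show ((n : ℝ) - 1) * ((n : ℝ) - 2) = p * (p - 1) by rw [hp_def]; ring]
    exact mul_one_sub_mul_rpow_sub_one (hr₁.trans hr)
  have hW (r) (hr : r₁ < r) : V r * A' r / 2 - V' r * A r = 0 := by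
    refine eq_of_hasDerivAt_zero_of_tendsto (fun x hx => hasDerivAt_weightedWronskian (hA x hx)
      (hA' x hx) (hV' x hx) (hV'' x hx) (hode' x hx)) ?_ r hr
    have hV'0 : Tendsto V' atTop (𝓝 0) :=
      hlim'.trans_tendsto (by simpa using tendsto_inv_atTop_zero)
    rw [show (0 : ℝ) = 1 * 0 / 2 - 0 * 1 by norm_num]
    exact ((hlim.mul (tendsto_mul_rpow_sub_one m₀ (hp.trans one_pos))).div_const 2).sub
      (hV'0.mul (tendsto_one_sub_mul_rpow m₀ hp))
  have hVu (r) (hr : r₁ < r) : V r * A r ^ (-(1 / 2) : ℝ) = 1 := by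
    refine eq_of_hasDerivAt_zero_of_tendsto (fun x hx =>
      hasDerivAt_mul_rpow_neg_half_eq_zero (hA x hx) (hV' x hx) (hdef x hx) (hW x hx)) ?_ r hr
    simpa using hlim.mul ((tendsto_one_sub_mul_rpow m₀ hp).rpow_const (Or.inl one_ne_zero))
  intro r hr
  have h := hVu r hr
  rwa [rpow_neg_half_eq_inv_sqrt (hdef r hr).le,
    mul_inv_eq_one₀ (Real.sqrt_pos.2 (hdef r hr)).ne'] at h
end

section
/- If H : Σ × [0,∞) → ℝ satisfies ∂H/∂t ≥ H^{-2} Δ_{Σ_t} H − 2 |∇H|²/H³ − (n/(2(n-1))) H along a smooth flow on a closed manifold Σ, with H(·,0) > 0, then min_{Σ_t} H ≥ e^{−(n/(2(n-1))) t} min_{Σ_0} H for all t ≥ 0. -/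
open Filter Topology Set


/-- If `H` on a closed manifold satisfies the parabolic inequality
`∂H/∂t ≥ H⁻² Δ H − 2|∇H|²/H³ − (n/(2(n-1))) H` (with `L = ΔH` and `Gq = |∇H|²`
abstract, subject to the second-derivative test `ΔH ≥ 0`, `∇H = 0` at a spatial
minimum), and `H(·,0) > 0`, then `min H(·,t) ≥ e^{−(n/(2(n-1)))t} min H(·,0)`. -/
theorem mean_curvature_lower_bound_max_principle
    {S : Type*} [TopologicalSpace S] [CompactSpace S] [Nonempty S]
    (n : ℕ) (hn : 2 ≤ n)
    (H H' L Gq : ℝ → S → ℝ)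
    (hcont : Continuous fun tp : ℝ × S => H tp.1 tp.2)
    (hderiv : ∀ t p, HasDerivAt (fun s => H s p) (H' t p) t)
    (hGq : ∀ t p, 0 ≤ Gq t p)
    (hmintest : ∀ t p, (∀ q, H t p ≤ H t q) → 0 ≤ L t p ∧ Gq t p = 0)
    (hH0 : ∀ p, 0 < H 0 p)
    (hineq : ∀ t p, 0 ≤ t →
      ((H t p)⁻¹) ^ 2 * L t p - 2 * Gq t p / (H t p) ^ 3
          - ((n : ℝ) / (2 * ((n : ℝ) - 1))) * H t p ≤ H' t p) :
    ∀ t p, 0 ≤ t →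
      Real.exp (-((n : ℝ) / (2 * ((n : ℝ) - 1))) * t) * (⨅ q, H 0 q) ≤ H t p := by
  intro t p ht
  set c : ℝ := (n : ℝ) / (2 * ((n : ℝ) - 1)) with hc
  set m₀ : ℝ := ⨅ q, H 0 q with hm
  have hcont0 : Continuous (H 0) := hcont.comp (continuous_const.prodMk continuous_id)
  obtain ⟨qs, -, hqs'⟩ := isCompact_univ.exists_isMinOn univ_nonempty hcont0.continuousOn
  have hqs : ∀ q, H 0 qs ≤ H 0 q := fun q => hqs' (mem_univ q)
  have hm0_le : ∀ q, m₀ ≤ H 0 q := fun q =>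
    ciInf_le ⟨H 0 qs, by rintro _ ⟨r, rfl⟩; exact hqs r⟩ q
  have hm0_pos : 0 < m₀ := lt_of_lt_of_le (hH0 qs) (le_ciInf fun q => hqs q)
  have hFcont : Continuous fun x : ℝ × S => Real.exp (c * x.1) * H x.1 x.2 :=
    (Real.continuous_exp.comp (continuous_const.mul continuous_fst)).mul hcont
  have key : ∀ ε > 0, m₀ - ε * (1 + t) < Real.exp (c * t) * H t p := by
    intro ε hε
    set A : Set ℝ := {s | s ∈ Icc 0 t ∧
        ∀ u ∈ Icc 0 s, ∀ q, m₀ - ε * (1 + u) < Real.exp (c * u) * H u q} with hA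
    have h0A : (0:ℝ) ∈ A := by
      refine ⟨⟨le_refl 0, ht⟩, ?_⟩
      intro u hu q
      have hu0 : u = 0 := le_antisymm hu.2 hu.1
      subst hu0
      simp only [mul_zero, Real.exp_zero, one_mul]
      have := hm0_le q
      nlinarith
    have hbdd : BddAbove A := ⟨t, fun x hx => hx.1.2⟩
    set T := sSup A with hT
    have hT0 : 0 ≤ T := le_csSup hbdd h0A
    have hTt : T ≤ t := csSup_le ⟨0, h0A⟩ fun x hx => hx.1.2
    have hPlt : ∀ u, 0 ≤ u → u < T →
        ∀ q, m₀ - ε * (1 + u) < Real.exp (c * u) * H u q := by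
      intro u hu0 huT q
      obtain ⟨a, haA, hua⟩ := exists_lt_of_lt_csSup ⟨0, h0A⟩ huT
      exact haA.2 u ⟨hu0, le_of_lt hua⟩ q
    have hTle : ∀ q, m₀ - ε * (1 + T) ≤ Real.exp (c * T) * H T q := by
      intro q
      rcases eq_or_lt_of_le hT0 with h0T | h0T
      · rw [← h0T]
        exact (h0A.2 0 ⟨le_refl 0, le_refl 0⟩ q).le
      · have hg : Tendsto (fun s => Real.exp (c * s) * H s q) (𝓝[<] T)
            (𝓝 (Real.exp (c * T) * H T q)) :=
          ((hFcont.comp (continuous_id.prodMk continuous_const)).tendsto T).mono_left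
            nhdsWithin_le_nhds
        have hf : Tendsto (fun s => m₀ - ε * (1 + s)) (𝓝[<] T)
            (𝓝 (m₀ - ε * (1 + T))) :=
          ((continuous_const.sub (continuous_const.mul
            (continuous_const.add continuous_id))).tendsto T).mono_left nhdsWithin_le_nhds
        refine le_of_tendsto_of_tendsto hf hg ?_
        filter_upwards [Ioo_mem_nhdsLT h0T] with s hs
        exact (hPlt s hs.1.le hs.2 q).le
    by_cases hstrict : ∀ q, m₀ - ε * (1 + T) < Real.exp (c * T) * H T q
    · have hTeq : T = t := by
        by_contra hne
        have hTlt : T < t := lt_of_le_of_ne hTt hne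
        have hUopen : IsOpen {x : ℝ × S |
            m₀ - ε * (1 + x.1) < Real.exp (c * x.1) * H x.1 x.2} :=
          isOpen_lt (continuous_const.sub (continuous_const.mul
            (continuous_const.add continuous_fst))) hFcont
        obtain ⟨u, v, hu, -, hTu, hvv, huv⟩ := generalized_tube_lemma isCompact_singleton
          isCompact_univ hUopen (by
            rintro ⟨s, q⟩ ⟨hs, -⟩
            rw [mem_singleton_iff] at hs
            subst hs
            exact hstrict q)
        have hunhds : u ∈ 𝓝 T := hu.mem_nhds (hTu rfl)
        obtain ⟨δ, hδ, hball⟩ := Metric.mem_nhds_iff.mp hunhds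
        set T' := min t (T + δ/2) with hT'
        have hTT' : T < T' := lt_min hTlt (by linarith)
        have hT'A : T' ∈ A := by
          refine ⟨⟨by linarith, min_le_left _ _⟩, ?_⟩
          intro w hw q
          rcases lt_or_ge w T with hwT | hwT
          · exact hPlt w hw.1 hwT q
          · have hwu : w ∈ u := by
              apply hball
              rw [Metric.mem_ball, Real.dist_eq, abs_lt]
              have : w ≤ T + δ/2 := le_trans hw.2 (min_le_right _ _)
              constructor <;> linarith
            exact huv (show (w, q) ∈ u ×ˢ v from ⟨hwu, hvv trivial⟩)
        have : T' ≤ T := le_csSup hbdd hT'A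
        linarith
      rw [hTeq] at hstrict
      exact hstrict p
    · exfalso
      push_neg at hstrict
      obtain ⟨q₀, hq₀⟩ := hstrict
      have hTpos : 0 < T := by
        rcases eq_or_lt_of_le hT0 with h0T | h0T
        · exfalso
          have h1 := hm0_le q₀
          rw [← h0T] at hq₀
          simp only [mul_zero, Real.exp_zero, one_mul] at hq₀
          nlinarith
        · exact h0T
      have hmin : ∀ q, H T q₀ ≤ H T q := by
        intro q
        have h1 : Real.exp (c * T) * H T q₀ ≤ Real.exp (c * T) * H T q :=
          le_trans hq₀ (hTle q)
        exact le_of_mul_le_mul_left h1 (Real.exp_pos _)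
      obtain ⟨hL, hG⟩ := hmintest T q₀ hmin
      have hineq' := hineq T q₀ hT0
      rw [hG] at hineq'
      have hD : -(c * H T q₀) ≤ H' T q₀ := by
        have h2 : 0 ≤ ((H T q₀)⁻¹) ^ 2 * L T q₀ := mul_nonneg (sq_nonneg _) hL
        have h3 : (2 : ℝ) * 0 / (H T q₀) ^ 3 = 0 := by ring
        rw [h3] at hineq'
        linarith
      set G : ℝ → ℝ := fun s => Real.exp (c * s) * H s q₀ + ε * s with hGdef
      have hGderiv : HasDerivAt G
          (Real.exp (c * T) * (c * 1) * H T q₀ + Real.exp (c * T) * H' T q₀ + ε * 1) T := by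
        exact (((((hasDerivAt_id T).const_mul c).exp).mul (hderiv T q₀)).add
          ((hasDerivAt_id T).const_mul ε))
      have hG'pos : 0 < Real.exp (c * T) * (c * 1) * H T q₀
          + Real.exp (c * T) * H' T q₀ + ε * 1 := by
        have he := Real.exp_pos (c * T)
        nlinarith [mul_le_mul_of_nonneg_left hD he.le]
      have hGlt : ∀ s, 0 ≤ s → s < T → G T < G s := by
        intro s hs0 hsT
        have h1 := hPlt s hs0 hsT q₀
        have h2 : G T ≤ m₀ - ε := by
          simp only [hGdef]
          linarith
        have h3 : m₀ - ε < G s := by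
          simp only [hGdef]
          linarith
        linarith
      have htend : Tendsto (slope G T) (𝓝[<] T)
          (𝓝 (Real.exp (c * T) * (c * 1) * H T q₀
            + Real.exp (c * T) * H' T q₀ + ε * 1)) :=
        (hasDerivAt_iff_tendsto_slope.mp hGderiv).mono_left
          (nhdsWithin_mono T fun x hx => ne_of_lt hx)
      have hle : Real.exp (c * T) * (c * 1) * H T q₀
          + Real.exp (c * T) * H' T q₀ + ε * 1 ≤ 0 := by
        refine le_of_tendsto htend ?_
        filter_upwards [Ioo_mem_nhdsLT hTpos] with s hs
        rw [slope_def_field]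
        apply div_nonpos_of_nonneg_of_nonpos
        · linarith [hGlt s hs.1.le hs.2]
        · linarith [hs.2]
      linarith
  have hfin : m₀ ≤ Real.exp (c * t) * H t p := by
    by_contra hlt
    push_neg at hlt
    have h1t : (0:ℝ) < 1 + t := by linarith
    set d := m₀ - Real.exp (c * t) * H t p with hd
    have hdpos : 0 < d := by simp only [hd]; linarith
    have hεpos : 0 < d / (2 * (1 + t)) := by positivity
    have h := key _ hεpos
    have heq : d / (2 * (1 + t)) * (1 + t) = d / 2 := by
      field_simp
    rw [heq] at h
    simp only [hd] at h
    linarith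
  have hexp : Real.exp (-c * t) * Real.exp (c * t) = 1 := by
    rw [← Real.exp_add]
    ring_nf
    exact Real.exp_zero
  calc Real.exp (-c * t) * m₀
      ≤ Real.exp (-c * t) * (Real.exp (c * t) * H t p) :=
        mul_le_mul_of_nonneg_left hfin (Real.exp_pos _).le
    _ = H t p := by rw [← mul_assoc, hexp, one_mul]
end

section
/- Under smooth inverse mean curvature flow ∂X/∂t = ν/H in a static space (M,g,V) (so R(g)=0, Δ_g V = 0, Hess_g V = V Ric_g), the functional Q(t) = |Σ_t|^{−(n−2)/(n−1)} ( ∫_{Σ_t} V H dσ + 2(n−1)ω_{n−1} m ) satisfies dQ/dt = − |Σ_t|^{−(n−2)/(n−1)} ∫_{Σ_t} (V/H) |h̊|² dσ ≤ 0, where h̊ is the trace-free second fundamental form and m = (1/((n−2)ω_{n−1})) ∫_{Σ_t} ∂V/∂ν dσ is constant in t. -/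
/-!
Under IMCF the area density grows like `eᵗ`, so `A' = A`. Differentiating `B = ∫ V H dσ` with
the variation formulas for `V`, `H` and `dσ`, the `Ric(ν,ν)` terms cancel and, after integrating
by parts, so do the Laplacian terms; what remains is
`B' = (n-2)/(n-1) · B + 2 ∫ ∂V/∂ν dσ - ∫ (V/H)|h̊|² dσ`.
Since `∫ ∂V/∂ν dσ = (n-2) ω m` is constant, the weight `A^{-(n-2)/(n-1)}` absorbs the linear
part and only the `|h̊|²` term survives in `Q'`.
-/

open MeasureTheory

section Leibniz

variable {S : Type*} [MeasurableSpace S]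

def HasLeibnizRule (μ : Measure S) : Prop :=
  ∀ f f' : ℝ → S → ℝ, (∀ t p, HasDerivAt (fun s => f s p) (f' t p) t) →
    ∀ t, HasDerivAt (fun s => ∫ p, f s p ∂μ) (∫ p, f' t p ∂μ) t

variable {μ : Measure S}

/-- No integrability is needed: `s ↦ ∫ (a + s b) - s ∫ b` has zero derivative, so it takes
the same value at `s = 0` and `s = 1`. -/
theorem HasLeibnizRule.integral_add (hL : HasLeibnizRule μ) (a b : S → ℝ) :
    ∫ p, (a p + b p) ∂μ = (∫ p, a p ∂μ) + ∫ p, b p ∂μ := by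
  have hderiv : ∀ s : ℝ,
      HasDerivAt (fun s => (∫ p, (a p + s * b p) ∂μ) - s * ∫ p, b p ∂μ) 0 s := fun s => by
    have := (hL (fun s p => a p + s * b p) (fun _ p => b p)
      (fun _ q => (hasDerivAt_mul_const (b q)).const_add (a q)) s).sub
      (hasDerivAt_mul_const (∫ p, b p ∂μ))
    rwa [sub_self] at this
  have hconst := is_const_of_deriv_eq_zero (fun s => (hderiv s).differentiableAt)
    (fun s => (hderiv s).deriv) 1 0
  simp only [one_mul, zero_mul, add_zero, sub_zero] at hconst
  linarith

theorem HasLeibnizRule.integral_sub (hL : HasLeibnizRule μ) (a b : S → ℝ) :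
    ∫ p, (a p - b p) ∂μ = (∫ p, a p ∂μ) - ∫ p, b p ∂μ := by
  simp only [sub_eq_add_neg, hL.integral_add, integral_neg]

end Leibniz

theorem imcf_deriv_VHJ_eq {v h j dv ric lapV lapInvH osc d : ℝ} (hh : h ≠ 0) :
    ((lapV / h ^ 2 + v * ric / h ^ 2 + 2 * dv / h) * h
        + v * (-lapInvH - (osc + h ^ 2 / d + ric) / h)) * j + v * h * j
      = h⁻¹ * lapV * j - v * lapInvH * j + 2 * (dv * j) - v / h * osc * j
        + (1 - d⁻¹) * (v * h * j) := by
  field_simp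
  ring

/-- Here `d = n - 1` is the dimension of the hypersurface. -/
theorem hasDerivAt_integral_VHJ {S : Type*} [MeasurableSpace S] {μ : Measure S}
    (hL : HasLeibnizRule μ) {d : ℝ} {V H J DV Ric LapV LapInvH osc : ℝ → S → ℝ}
    (hH : ∀ t p, H t p ≠ 0)
    (hJev : ∀ t p, HasDerivAt (fun s => J s p) (J t p) t)
    (hHev : ∀ t p, HasDerivAt (fun s => H s p)
      (-(LapInvH t p) - (osc t p + (H t p) ^ 2 / d + Ric t p) / H t p) t)
    (hVev : ∀ t p, HasDerivAt (fun s => V s p)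
      (LapV t p / (H t p) ^ 2 + V t p * Ric t p / (H t p) ^ 2 + 2 * DV t p / H t p) t)
    {t : ℝ} (hIBP : ∫ p, V t p * LapInvH t p * J t p ∂μ
      = ∫ p, (H t p)⁻¹ * LapV t p * J t p ∂μ) :
    HasDerivAt (fun s => ∫ p, V s p * H s p * J s p ∂μ)
      ((1 - d⁻¹) * (∫ p, V t p * H t p * J t p ∂μ) + 2 * (∫ p, DV t p * J t p ∂μ)
        - ∫ p, V t p / H t p * osc t p * J t p ∂μ) t := by
  refine (hL (fun s p => V s p * H s p * J s p) _
    (fun t p => ((hVev t p).mul (hHev t p)).mul (hJev t p)) t).congr_deriv ?_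
  simp only [Pi.mul_apply, imcf_deriv_VHJ_eq (hH t _), hL.integral_add, hL.integral_sub,
    integral_const_mul, hIBP]
  ring

/-- `(A^{-c})' = -c A^{-c}` cancels the linear part of `B'`. -/
theorem hasDerivAt_rpow_neg_mul_add_of_deriv_eq_self {A B : ℝ → ℝ} {t c K I : ℝ}
    (hA : HasDerivAt A (A t) t) (hA0 : A t ≠ 0) (hB : HasDerivAt B (c * (B t + K) - I) t) :
    HasDerivAt (fun s => A s ^ (-c) * (B s + K)) (-(A t ^ (-c)) * I) t := by
  have hpow : HasDerivAt (fun s => A s ^ (-c)) (-c * A t ^ (-c)) t :=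
    (hA.rpow_const (Or.inl hA0)).congr_deriv (by rw [Real.rpow_sub_one hA0]; field_simp)
  exact (hpow.mul (hB.add_const K)).congr_deriv (by ring)

theorem Q_monotone_smooth_IMCF_general
    {S : Type*} [MeasurableSpace S] (μ : Measure S)
    (n : ℕ) (hn : 3 ≤ n) (ω m : ℝ)
    (V H J DV Ric LapV LapInvH osc : ℝ → S → ℝ)
    (hHpos : ∀ t p, 0 < H t p) (hVpos : ∀ t p, 0 < V t p) (hJpos : ∀ t p, 0 < J t p)
    (hosc : ∀ t p, 0 ≤ osc t p)
    (hJev : ∀ t p, HasDerivAt (fun s => J s p) (J t p) t)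
    (hHev : ∀ t p, HasDerivAt (fun s => H s p)
      (-(LapInvH t p) - (osc t p + (H t p) ^ 2 / ((n : ℝ) - 1) + Ric t p) / H t p) t)
    (hVev : ∀ t p, HasDerivAt (fun s => V s p)
      (LapV t p / (H t p) ^ 2 + V t p * Ric t p / (H t p) ^ 2 + 2 * DV t p / H t p) t)
    (hIBP : ∀ t, ∫ p, V t p * LapInvH t p * J t p ∂μ
      = ∫ p, (H t p)⁻¹ * LapV t p * J t p ∂μ)
    (hmass : ∀ t, ∫ p, DV t p * J t p ∂μ = ((n : ℝ) - 2) * ω * m)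
    (hLeibniz : ∀ f f' : ℝ → S → ℝ,
      (∀ t p, HasDerivAt (fun s => f s p) (f' t p) t) →
      ∀ t, HasDerivAt (fun s => ∫ p, f s p ∂μ) (∫ p, f' t p ∂μ) t)
    (A B Q : ℝ → ℝ)
    (hA : ∀ t, A t = ∫ p, J t p ∂μ) (hApos : ∀ t, 0 < A t)
    (hB : ∀ t, B t = ∫ p, V t p * H t p * J t p ∂μ)
    (hQ : ∀ t, Q t = A t ^ (-(((n : ℝ) - 2) / ((n : ℝ) - 1)))
      * (B t + 2 * ((n : ℝ) - 1) * ω * m)) :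
    ∀ t, HasDerivAt Q
        (-(A t ^ (-(((n : ℝ) - 2) / ((n : ℝ) - 1))))
          * ∫ p, V t p / H t p * osc t p * J t p ∂μ) t
      ∧ -(A t ^ (-(((n : ℝ) - 2) / ((n : ℝ) - 1))))
          * ∫ p, V t p / H t p * osc t p * J t p ∂μ ≤ 0 := by
  intro t
  have hd : (n : ℝ) - 1 ≠ 0 := by
    have : (3 : ℝ) ≤ n := by exact_mod_cast hn
    linarith
  have hAd : HasDerivAt A (A t) t := by
    rw [funext hA]
    exact hLeibniz J J hJev t
  have hBd : HasDerivAt B (((n : ℝ) - 2) / ((n : ℝ) - 1) * (B t + 2 * ((n : ℝ) - 1) * ω * m)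
      - ∫ p, V t p / H t p * osc t p * J t p ∂μ) t := by
    rw [funext hB]
    convert hasDerivAt_integral_VHJ hLeibniz (fun t p => (hHpos t p).ne') hJev hHev hVev
      (hIBP t) using 1
    rw [hmass t]
    beta_reduce
    field_simp
    ring
  refine ⟨funext hQ ▸ hasDerivAt_rpow_neg_mul_add_of_deriv_eq_self hAd (hApos t).ne' hBd, ?_⟩
  have hI : 0 ≤ ∫ p, V t p / H t p * osc t p * J t p ∂μ := integral_nonneg fun p =>
    mul_nonneg (mul_nonneg (div_nonneg (hVpos t p).le (hHpos t p).le) (hosc t p)) (hJpos t p).le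
  rw [neg_mul]
  exact neg_nonpos.mpr (mul_nonneg (Real.rpow_nonneg (hApos t).le _) hI)

/-- Under smooth inverse mean curvature flow in a static space, the
functional `Q(t) = |Σ_t|^{−(n−2)/(n−1)} (∫_{Σ_t} V H dσ + 2(n−1)ω_{n−1} m)` satisfies
`Q'(t) = −|Σ_t|^{−(n−2)/(n−1)} ∫_{Σ_t} (V/H)|h̊|² dσ ≤ 0`.

The evolving hypersurface is modelled by a fixed measure space `(S, μ)` with
time-dependent area density `J` (so `∂J/∂t = J` under IMCF and `|Σ_t| = ∫ J dμ`);
`V, H, DV = ∂V/∂ν, Ric = Ric(ν,ν), LapV = Δ_{Σ_t}V, LapInvH = Δ_{Σ_t}(1/H)` and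
`osc = |h̊|²` are the relevant geometric quantities, subject to the IMCF variation
formulas, the static identity, self-adjointness of `Δ_{Σ_t}` (integration by parts),
constancy of the mass `m`, and differentiation under the integral sign. -/
theorem Q_monotone_smooth_IMCF
    {S : Type*} [MeasurableSpace S] (μ : Measure S)
    (n : ℕ) (hn : 3 ≤ n) (ω m : ℝ) (hω : 0 < ω)
    (V H J DV Ric LapV LapInvH osc : ℝ → S → ℝ)
    (hHpos : ∀ t p, 0 < H t p) (hVpos : ∀ t p, 0 < V t p) (hJpos : ∀ t p, 0 < J t p)
    (hosc : ∀ t p, 0 ≤ osc t p)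
    (hJev : ∀ t p, HasDerivAt (fun s => J s p) (J t p) t)
    (hHev : ∀ t p, HasDerivAt (fun s => H s p)
      (-(LapInvH t p) - (osc t p + (H t p) ^ 2 / ((n : ℝ) - 1) + Ric t p) / H t p) t)
    (hVev : ∀ t p, HasDerivAt (fun s => V s p)
      (LapV t p / (H t p) ^ 2 + V t p * Ric t p / (H t p) ^ 2 + 2 * DV t p / H t p) t)
    (hstatic : ∀ t p, LapV t p + V t p * Ric t p = -(H t p) * DV t p)
    (hIBP : ∀ t, ∫ p, V t p * LapInvH t p * J t p ∂μ
      = ∫ p, (H t p)⁻¹ * LapV t p * J t p ∂μ)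
    (hmass : ∀ t, ∫ p, DV t p * J t p ∂μ = ((n : ℝ) - 2) * ω * m)
    (hLeibniz : ∀ f f' : ℝ → S → ℝ,
      (∀ t p, HasDerivAt (fun s => f s p) (f' t p) t) →
      ∀ t, HasDerivAt (fun s => ∫ p, f s p ∂μ) (∫ p, f' t p ∂μ) t)
    (A B Q : ℝ → ℝ)
    (hA : ∀ t, A t = ∫ p, J t p ∂μ) (hApos : ∀ t, 0 < A t)
    (hB : ∀ t, B t = ∫ p, V t p * H t p * J t p ∂μ)
    (hQ : ∀ t, Q t = A t ^ (-(((n : ℝ) - 2) / ((n : ℝ) - 1)))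
      * (B t + 2 * ((n : ℝ) - 1) * ω * m)) :
    ∀ t, HasDerivAt Q
        (-(A t ^ (-(((n : ℝ) - 2) / ((n : ℝ) - 1))))
          * ∫ p, V t p / H t p * osc t p * J t p ∂μ) t
      ∧ -(A t ^ (-(((n : ℝ) - 2) / ((n : ℝ) - 1))))
          * ∫ p, V t p / H t p * osc t p * J t p ∂μ ≤ 0 :=
  Q_monotone_smooth_IMCF_general μ n hn ω m V H J DV Ric LapV LapInvH osc hHpos hVpos hJpos hosc
    hJev hHev hVev hIBP hmass hLeibniz A B Q hA hApos hB hQ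
end

section
/- If Φ ∈ H_{ℓ=1} on S² (so ΔΦ = −2Φ) and φ ∈ H_{ℓ=2} (Δφ = −6φ), then ∫_{S²} (2Φ ΔΦ − 3Φ²) φ dσ = −7 ∫_{S²} Φ² φ dσ. In particular, the vanishing of the ℓ=2 projection of 2Φ ΔΦ − 3Φ² for Φ ∈ H_{ℓ=1} forces Φ = 0. -/
open scoped RealInnerProductSpace
open MeasureTheory

open Set Metric Real

open Real Set MeasureTheory

lemma J_val (n : ℕ) : ∫ x in Ioi (0:ℝ), x ^ n * Real.exp (-x^2)
    = (1/2) * Real.Gamma ((n+1)/2) := by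
  have h := integral_rpow_mul_exp_neg_rpow (p := 2) (q := n) (by norm_num)
    (by exact_mod_cast neg_lt_iff_pos_add.mpr (by positivity : (0:ℝ) < (n:ℝ) + 1))
  rw [← h]
  refine setIntegral_congr_fun measurableSet_Ioi (fun x hx => ?_)
  rw [← Real.rpow_natCast x n, ← Real.rpow_two]

lemma intM (n : ℕ) : Integrable (fun x : ℝ => x ^ n * Real.exp (-x^2)) := by
  have h := integrable_rpow_mul_exp_neg_mul_sq (b := 1) one_pos
    (s := n) (by exact_mod_cast neg_lt_iff_pos_add.mpr (by positivity : (0:ℝ) < (n:ℝ) + 1))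
  simpa [Real.rpow_natCast] using h

lemma M_val (n : ℕ) (hn : Even n) : ∫ x : ℝ, x ^ n * Real.exp (-x^2)
    = Real.Gamma ((n+1)/2) := by
  have heven : ∀ x : ℝ, (-x) ^ n * Real.exp (-(-x)^2) = x ^ n * Real.exp (-x^2) := by
    intro x; rw [hn.neg_pow, neg_sq]
  have h1 : (∫ x in Iic (0:ℝ), x ^ n * Real.exp (-x^2))
      = ∫ x in Ioi (0:ℝ), x ^ n * Real.exp (-x^2) := by
    have h2 := integral_comp_neg_Iic (0:ℝ) (fun x => x ^ n * Real.exp (-x^2))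
    simp only [heven, neg_zero] at h2
    exact h2
  rw [← intervalIntegral.integral_Iic_add_Ioi (b := (0:ℝ)) ((intM n).integrableOn) ((intM n).integrableOn),
    h1, J_val, ← two_mul]
  ring

lemma Gamma32 : Real.Gamma (3/2) = Real.sqrt π / 2 := by
  have : (3/2 : ℝ) = 1/2 + 1 := by norm_num
  rw [this, Real.Gamma_add_one (by norm_num), Real.Gamma_one_half_eq]; ring

lemma Gamma52 : Real.Gamma (5/2) = 3 * Real.sqrt π / 4 := by
  have : (5/2 : ℝ) = 3/2 + 1 := by norm_num
  rw [this, Real.Gamma_add_one (by norm_num), Gamma32]; ring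

lemma Gamma72 : Real.Gamma (7/2) = 15 * Real.sqrt π / 8 := by
  have : (7/2 : ℝ) = 5/2 + 1 := by norm_num
  rw [this, Real.Gamma_add_one (by norm_num), Gamma52]; ring

lemma M0_val : ∫ x : ℝ, x ^ 0 * Real.exp (-x^2) = Real.sqrt π := by
  rw [M_val 0 Even.zero]; norm_num [Real.Gamma_one_half_eq]

lemma M2_val : ∫ x : ℝ, x ^ 2 * Real.exp (-x^2) = Real.sqrt π / 2 := by
  rw [M_val 2 (by decide)]; norm_num [Gamma32]

lemma M4_val : ∫ x : ℝ, x ^ 4 * Real.exp (-x^2) = 3 * Real.sqrt π / 4 := by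
  rw [M_val 4 (by decide)]; norm_num [Gamma52]

lemma J6_val : ∫ x in Ioi (0:ℝ), x ^ 6 * Real.exp (-x^2) = 15 * Real.sqrt π / 16 := by
  rw [J_val 6]; norm_num [Gamma72]; ring




variable {E : Type*} [NormedAddCommGroup E] [NormedSpace ℝ E] [MeasurableSpace E]
  [BorelSpace E] [FiniteDimensional ℝ E] [Nontrivial E]

local notation "dim" => Module.finrank ℝ

lemma sphere_integral_eq (μ : Measure E) [μ.IsAddHaarMeasure] (p : E → ℝ)
    (hp : ∀ (r : ℝ), 0 < r → ∀ ω : E, ‖ω‖ = 1 → p (r • ω) * Real.exp (-‖r • ω‖^2)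
      = (p ω) * (r ^ 4 * Real.exp (-r^2))) :
    ∫ x : E, p x * Real.exp (-‖x‖^2) ∂μ
      = (∫ ω : sphere (0:E) 1, p ω ∂μ.toSphere)
        * ∫ r in Ioi (0:ℝ), r ^ (dim E - 1) * (r ^ 4 * Real.exp (-r^2)) := by
  set h : E → ℝ := fun x => p x * Real.exp (-‖x‖^2) with hh
  calc
    ∫ x, h x ∂μ = ∫ x : ({(0:E)}ᶜ : Set E), h x.1 ∂(μ.comap (↑)) := by
      rw [MeasureTheory.integral_subtype_comap (measurableSet_singleton _).compl h,
        restrict_compl_singleton]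
    _ = ∫ z : sphere (0 : E) 1 × Ioi (0 : ℝ),
          (fun z : sphere (0 : E) 1 × Ioi (0 : ℝ) => p z.1 * (z.2.1 ^ 4 * Real.exp (-z.2.1 ^ 2))) z
          ∂μ.toSphere.prod (.volumeIoiPow (dim E - 1)) := by
      rw [← (μ.measurePreserving_homeomorphUnitSphereProd).integral_comp
        (Homeomorph.measurableEmbedding _)]
      refine integral_congr_ae (Filter.Eventually.of_forall fun x => ?_)
      have hx : x.1 ≠ 0 := x.2
      have : ((homeomorphUnitSphereProd E x).2 : ℝ) • ((homeomorphUnitSphereProd E x).1 : E)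
          = x.1 := by
        simp [homeomorphUnitSphereProd, smul_inv_smul₀ (norm_ne_zero_iff.2 hx)]
      set ω := (homeomorphUnitSphereProd E x).1
      set r := (homeomorphUnitSphereProd E x).2
      have hr : (0:ℝ) < r := r.2
      have hω : ‖(ω:E)‖ = 1 := mem_sphere_zero_iff_norm.1 ω.2
      calc h x.1 = h ((r:ℝ) • (ω:E)) := by rw [this]
        _ = p ω * ((r:ℝ) ^ 4 * Real.exp (-(r:ℝ)^2)) := hp r hr ω hω
    _ = (∫ ω : sphere (0:E) 1, p ω ∂μ.toSphere)
          * ∫ r : Ioi (0:ℝ), (r.1 ^ 4 * Real.exp (-r.1^2)) ∂(Measure.volumeIoiPow (dim E - 1)) :=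
      MeasureTheory.integral_prod_mul (μ := μ.toSphere) (ν := Measure.volumeIoiPow (dim E - 1))
        (fun ω : sphere (0:E) 1 => p ω) (fun r : Ioi (0:ℝ) => r.1 ^ 4 * Real.exp (-r.1^2))
    _ = _ := by
      congr 1
      simp only [Measure.volumeIoiPow, ENNReal.ofReal]
      rw [integral_withDensity_eq_integral_smul
        ((measurable_subtype_coe.pow_const _).real_toNNReal)]
      rw [MeasureTheory.integral_subtype_comap measurableSet_Ioi
        (fun a : ℝ => (a ^ (dim E - 1)).toNNReal • (a ^ 4 * Real.exp (-a ^ 2)))]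
      refine setIntegral_congr_fun measurableSet_Ioi fun x hx => ?_
      simp only [NNReal.smul_def, Real.coe_toNNReal _ (pow_nonneg (le_of_lt hx) _)]
      rw [smul_eq_mul, mul_comm]


noncomputable abbrev E3 := EuclideanSpace ℝ (Fin 3)

lemma normsq_eq (x : E3) : ‖x‖^2 = ∑ i, (x i)^2 := by
  rw [EuclideanSpace.norm_eq, Real.sq_sqrt (by positivity)]
  simp [Real.norm_eq_abs, sq_abs]

lemma intM' (n : ℕ) : Integrable (fun x : ℝ => x ^ n * Real.exp (-x^2)) := by
  have h := integrable_rpow_mul_exp_neg_mul_sq (b := 1) one_pos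
    (s := n) (by exact_mod_cast neg_lt_iff_pos_add.mpr (by positivity : (0:ℝ) < (n:ℝ) + 1))
  simpa [Real.rpow_natCast] using h

-- product moments over pi space
lemma pi_moment (n : Fin 3 → ℕ) :
    ∫ y : Fin 3 → ℝ, ∏ i, ((y i) ^ (n i) * Real.exp (-(y i)^2))
      = ∏ i, ∫ t : ℝ, t ^ (n i) * Real.exp (-t^2) :=
  MeasureTheory.integral_fintype_prod_eq_prod
    (fun i t => t ^ (n i) * Real.exp (-t^2))

lemma pi_moment_int (n : Fin 3 → ℕ) :
    Integrable (fun y : Fin 3 → ℝ => ∏ i, ((y i) ^ (n i) * Real.exp (-(y i)^2))) :=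
  Integrable.fintype_prod (fun i => intM' (n i))

lemma gauss_pi_val :
    ∫ y : Fin 3 → ℝ, ((y 0)^4 - (1/3) * (y 0)^2 * ((y 0)^2 + (y 1)^2 + (y 2)^2))
        * Real.exp (-((y 0)^2 + (y 1)^2 + (y 2)^2))
      = π * Real.sqrt π / 3 := by
  have key : ∀ y : Fin 3 → ℝ,
      ((y 0)^4 - (1/3) * (y 0)^2 * ((y 0)^2 + (y 1)^2 + (y 2)^2))
        * Real.exp (-((y 0)^2 + (y 1)^2 + (y 2)^2))
      = (2/3) * (∏ i, ((y i) ^ (![4,0,0] i) * Real.exp (-(y i)^2)))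
        - (1/3) * (∏ i, ((y i) ^ (![2,2,0] i) * Real.exp (-(y i)^2)))
        - (1/3) * (∏ i, ((y i) ^ (![2,0,2] i) * Real.exp (-(y i)^2))) := by
    intro y
    simp only [Fin.prod_univ_three]
    rw [show -((y 0)^2 + (y 1)^2 + (y 2)^2) = (-(y 0)^2) + (-(y 1)^2) + (-(y 2)^2) by ring,
      Real.exp_add, Real.exp_add]
    norm_num [Matrix.cons_val_zero, Matrix.cons_val_one, Matrix.cons_val_two]
    ring
  simp only [key]
  rw [integral_sub (f := fun y : Fin 3 → ℝ =>
        (2/3) * (∏ i, ((y i) ^ (![4,0,0] i) * Real.exp (-(y i)^2)))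
        - (1/3) * (∏ i, ((y i) ^ (![2,2,0] i) * Real.exp (-(y i)^2))))
      (g := fun y : Fin 3 → ℝ => (1/3) * (∏ i, ((y i) ^ (![2,0,2] i) * Real.exp (-(y i)^2))))
      (((pi_moment_int ![4,0,0]).const_mul _).sub
      ((pi_moment_int ![2,2,0]).const_mul _)) ((pi_moment_int ![2,0,2]).const_mul _),
    integral_sub (f := fun y : Fin 3 → ℝ =>
        (2/3) * (∏ i, ((y i) ^ (![4,0,0] i) * Real.exp (-(y i)^2))))
      (g := fun y : Fin 3 → ℝ => (1/3) * (∏ i, ((y i) ^ (![2,2,0] i) * Real.exp (-(y i)^2))))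
      ((pi_moment_int ![4,0,0]).const_mul _) ((pi_moment_int ![2,2,0]).const_mul _),
    integral_const_mul, integral_const_mul, integral_const_mul,
    pi_moment, pi_moment, pi_moment]
  simp only [Fin.prod_univ_three]
  have M0' : ∫ t : ℝ, Real.exp (-t^2) = Real.sqrt π := by
    simpa using M0_val
  norm_num [M0', M2_val, M4_val, Matrix.cons_val_two]
  have h2 : Real.sqrt π * Real.sqrt π = π := Real.mul_self_sqrt pi_pos.le
  nlinarith [Real.sqrt_nonneg π]

lemma gauss_E3_val (a : E3) (ha : a ≠ 0) :
    ∫ x : E3, (⟪a,x⟫^4 - (‖a‖^2/3) * (⟪a,x⟫^2 * ‖x‖^2)) * Real.exp (-‖x‖^2)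
      = ‖a‖^4 * (π * Real.sqrt π / 3) := by
  set u : E3 := ‖a‖⁻¹ • a with hu_def
  have hu : ‖u‖ = 1 := norm_smul_inv_norm ha
  set v : E3 := EuclideanSpace.single (0 : Fin 3) (1:ℝ) with hv_def
  have hv : ‖v‖ = 1 := by simp [hv_def, EuclideanSpace.norm_single]
  set e : E3 ≃ₗᵢ[ℝ] E3 := Submodule.reflection (ℝ ∙ (u - v))ᗮ with he_def
  have heu : e u = v := Submodule.reflection_sub (hu.trans hv.symm)
  have hinner : ∀ x : E3, ⟪a, x⟫ = ‖a‖ * (e x) 0 := by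
    intro x
    have ha' : a = ‖a‖ • u := (smul_inv_smul₀ (norm_ne_zero_iff.2 ha) a).symm
    calc ⟪a, x⟫ = ⟪‖a‖ • u, x⟫ := by rw [← ha']
      _ = ‖a‖ * ⟪u, x⟫ := real_inner_smul_left u x ‖a‖
      _ = ‖a‖ * ⟪e u, e x⟫ := by rw [e.inner_map_map]
      _ = ‖a‖ * (e x) 0 := by
          rw [heu, hv_def, EuclideanSpace.inner_single_left]
          norm_num
  have hnorm : ∀ x : E3, ‖e x‖ = ‖x‖ := e.norm_map
  have step1 : ∫ x : E3, (⟪a,x⟫^4 - (‖a‖^2/3) * (⟪a,x⟫^2 * ‖x‖^2)) * Real.exp (-‖x‖^2)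
      = ∫ y : E3, ‖a‖^4 * ((((y 0):ℝ)^4 - (1/3) * ((y 0):ℝ)^2 * ‖y‖^2) * Real.exp (-‖y‖^2)) := by
    rw [← (e.measurePreserving).integral_comp e.toHomeomorph.measurableEmbedding
      (fun y : E3 => ‖a‖^4 * ((((y 0):ℝ)^4 - (1/3) * ((y 0):ℝ)^2 * ‖y‖^2) * Real.exp (-‖y‖^2)))]
    refine integral_congr_ae (Filter.Eventually.of_forall fun x => ?_)
    simp only [hinner x, hnorm x]
    ring
  rw [step1, MeasureTheory.integral_const_mul]
  congr 1
  have step2 : ∫ y : E3, ((((y 0):ℝ)^4 - (1/3) * ((y 0):ℝ)^2 * ‖y‖^2) * Real.exp (-‖y‖^2))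
      = ∫ z : Fin 3 → ℝ, ((z 0)^4 - (1/3) * (z 0)^2 * ((z 0)^2 + (z 1)^2 + (z 2)^2))
          * Real.exp (-((z 0)^2 + (z 1)^2 + (z 2)^2)) := by
    rw [← ((EuclideanSpace.volume_preserving_symm_measurableEquiv_toLp (Fin 3)).symm ((MeasurableEquiv.toLp 2 (Fin 3 → ℝ)).symm)).integral_comp
      (MeasurableEquiv.measurableEmbedding _)
      (fun y : E3 => ((((y 0):ℝ)^4 - (1/3) * ((y 0):ℝ)^2 * ‖y‖^2) * Real.exp (-‖y‖^2)))]
    refine integral_congr_ae (Filter.Eventually.of_forall fun z => ?_)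
    have hcoord : ∀ i, (((MeasurableEquiv.toLp 2 (Fin 3 → ℝ)).symm).symm z) i = z i := fun i => rfl
    have hn : ‖((MeasurableEquiv.toLp 2 (Fin 3 → ℝ)).symm).symm z‖^2
        = (z 0)^2 + (z 1)^2 + (z 2)^2 := by
      rw [normsq_eq, Fin.sum_univ_three, hcoord, hcoord, hcoord]
    simp only [hcoord, hn]
  rw [step2, gauss_pi_val]


lemma sphere_p_val (a : E3) (ha : a ≠ 0) :
    (∫ ω : Metric.sphere (0:E3) 1,
        (fun y : E3 => ⟪a,y⟫^4 - (‖a‖^2/3) * (⟪a,y⟫^2 * ‖y‖^2)) ↑ω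
        ∂(volume : Measure E3).toSphere) * (15 * Real.sqrt π / 16)
      = ‖a‖^4 * (π * Real.sqrt π / 3) := by
  have hdim : Module.finrank ℝ E3 = 3 := finrank_euclideanSpace_fin
  have hp : ∀ (r : ℝ), 0 < r → ∀ ω : E3, ‖ω‖ = 1 →
      (⟪a, r • ω⟫^4 - (‖a‖^2/3) * (⟪a, r • ω⟫^2 * ‖r • ω‖^2)) * Real.exp (-‖r • ω‖^2)
      = (⟪a,ω⟫^4 - (‖a‖^2/3) * (⟪a,ω⟫^2 * ‖ω‖^2)) * (r ^ 4 * Real.exp (-r^2)) := by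
    intro r hr ω hω
    have h1 : ⟪a, r • ω⟫ = r * ⟪a, ω⟫ := real_inner_smul_right a ω r
    have h2 : ‖r • ω‖ = r := by
      rw [norm_smul, hω, Real.norm_eq_abs, abs_of_pos hr, mul_one]
    rw [h1, h2, hω]
    ring
  have key := sphere_integral_eq (E := E3) volume
    (fun y : E3 => ⟪a,y⟫^4 - (‖a‖^2/3) * (⟪a,y⟫^2 * ‖y‖^2)) hp
  rw [gauss_E3_val a ha] at key
  have hrad : ∫ r in Ioi (0:ℝ), r ^ (Module.finrank ℝ E3 - 1) * (r ^ 4 * Real.exp (-r^2))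
      = 15 * Real.sqrt π / 16 := by
    rw [hdim, ← J6_val]
    refine setIntegral_congr_fun measurableSet_Ioi fun r hr => ?_
    ring
  rw [hrad] at key
  linarith


set_option maxRecDepth 10000 in
/-- On the round `S² ⊂ ℝ³`, let `Φ(x) = ⟪a,x⟫ ∈ H_{ℓ=1}` (so
`ΔΦ = −2Φ`).  Then for every `ℓ=2` eigenfunction `φ(x) = ∑ A_{ij} x_i x_j`
(`A` symmetric traceless), `∫ (2Φ·ΔΦ − 3Φ²) φ = −7 ∫ Φ² φ`; in particular, if the
`ℓ=2` projection of `2Φ·ΔΦ − 3Φ²` vanishes then `Φ = 0`, i.e. `a = 0`. -/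
theorem ell2_projection_forces_vanishing_on_S2
    (a : EuclideanSpace ℝ (Fin 3)) (Φ LΦ : EuclideanSpace ℝ (Fin 3) → ℝ)
    (hΦ : ∀ y, Φ y = ⟪a, y⟫) (hL : ∀ y, LΦ y = -2 * Φ y) :
    (∀ A : Matrix (Fin 3) (Fin 3) ℝ, A.IsSymm → A.trace = 0 →
      (∫ x : Metric.sphere (0 : EuclideanSpace ℝ (Fin 3)) 1,
        (fun y : EuclideanSpace ℝ (Fin 3) =>
          (2 * Φ y * LΦ y - 3 * (Φ y) ^ 2) * ∑ i, ∑ j, A i j * y i * y j) ↑x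
        ∂(volume : Measure (EuclideanSpace ℝ (Fin 3))).toSphere)
      = -7 * ∫ x : Metric.sphere (0 : EuclideanSpace ℝ (Fin 3)) 1,
          (fun y : EuclideanSpace ℝ (Fin 3) =>
            (Φ y) ^ 2 * ∑ i, ∑ j, A i j * y i * y j) ↑x
          ∂(volume : Measure (EuclideanSpace ℝ (Fin 3))).toSphere)
    ∧ ((∀ A : Matrix (Fin 3) (Fin 3) ℝ, A.IsSymm → A.trace = 0 →
        (∫ x : Metric.sphere (0 : EuclideanSpace ℝ (Fin 3)) 1,
          (fun y : EuclideanSpace ℝ (Fin 3) =>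
            (2 * Φ y * LΦ y - 3 * (Φ y) ^ 2) * ∑ i, ∑ j, A i j * y i * y j) ↑x
          ∂(volume : Measure (EuclideanSpace ℝ (Fin 3))).toSphere) = 0)
      → a = 0) := by
  have hpt : ∀ (A : Matrix (Fin 3) (Fin 3) ℝ) (y : EuclideanSpace ℝ (Fin 3)),
      (2 * Φ y * LΦ y - 3 * (Φ y) ^ 2) * ∑ i, ∑ j, A i j * y i * y j
      = -7 * ((Φ y) ^ 2 * ∑ i, ∑ j, A i j * y i * y j) := by
    intro A y; rw [hL y]; ring
  constructor
  · intro A _ _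
    exact (integral_congr_ae (Filter.Eventually.of_forall
      (fun x : Metric.sphere (0 : EuclideanSpace ℝ (Fin 3)) 1 => hpt A ↑x))).trans
      (MeasureTheory.integral_const_mul _ _)
  · intro H
    by_cases ha : a = 0
    · exact ha
    exfalso
    set c : ℝ := ‖a‖^2 with hc_def
    set A : Matrix (Fin 3) (Fin 3) ℝ :=
      !![a 0 * a 0 - c/3, a 0 * a 1, a 0 * a 2;
         a 1 * a 0, a 1 * a 1 - c/3, a 1 * a 2;
         a 2 * a 0, a 2 * a 1, a 2 * a 2 - c/3] with hA_def
    have hnormsq : c = (a 0)^2 + (a 1)^2 + (a 2)^2 := by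
      rw [hc_def, normsq_eq, Fin.sum_univ_three]
    have hsymm : A.IsSymm := by
      rw [Matrix.IsSymm]
      ext i j
      fin_cases i <;> fin_cases j <;>
        simp [hA_def, Matrix.transpose_apply, mul_comm]
    have htr : A.trace = 0 := by
      rw [hA_def, Matrix.trace_fin_three]
      simp only [Matrix.cons_val', Matrix.cons_val_zero, Matrix.cons_val_one,
        Matrix.head_cons, Matrix.head_fin_const, Matrix.empty_val',
        Matrix.cons_val_fin_one]
      simp
      rw [hnormsq]; ring
    have h0 := H A hsymm htr
    have hinner : ∀ y : E3, ⟪a, y⟫ = a 0 * y 0 + a 1 * y 1 + a 2 * y 2 := by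
      intro y
      rw [PiLp.inner_apply, Fin.sum_univ_three]
      norm_num
      ring
    -- identify the integrand with -7 * p on the sphere
    have hid : ∀ x : Metric.sphere (0 : EuclideanSpace ℝ (Fin 3)) 1,
        (fun y : EuclideanSpace ℝ (Fin 3) =>
          (2 * Φ y * LΦ y - 3 * (Φ y) ^ 2) * ∑ i, ∑ j, A i j * y i * y j) ↑x
        = -7 * ((fun y : E3 => ⟪a,y⟫^4 - (‖a‖^2/3) * (⟪a,y⟫^2 * ‖y‖^2)) ↑x) := by
      intro x
      have hx1 : ‖(↑x : E3)‖ = 1 := mem_sphere_zero_iff_norm.1 x.2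
      have hxsum : ((↑x : E3) 0)^2 + ((↑x : E3) 1)^2 + ((↑x : E3) 2)^2 = 1 := by
        have h := normsq_eq (↑x : E3)
        rw [hx1, Fin.sum_univ_three] at h
        norm_num at h
        linarith
      have hsum : ∑ i, ∑ j, A i j * (↑x : E3) i * (↑x : E3) j
          = (a 0 * (↑x : E3) 0 + a 1 * (↑x : E3) 1 + a 2 * (↑x : E3) 2)^2
            - (c/3) * (((↑x : E3) 0)^2 + ((↑x : E3) 1)^2 + ((↑x : E3) 2)^2) := by
        simp only [Fin.sum_univ_three, hA_def]
        simp
        ring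
      show (2 * Φ ↑x * LΦ ↑x - 3 * (Φ ↑x) ^ 2) * (∑ i, ∑ j, A i j * (↑x : E3) i * (↑x : E3) j)
        = -7 * (⟪a, (↑x : E3)⟫^4 - (‖a‖^2/3) * (⟪a, (↑x : E3)⟫^2 * ‖(↑x : E3)‖^2))
      rw [hL, hΦ, hsum, hinner, hx1, ← hc_def]
      linear_combination (7 * c / 3
        * (a 0 * (↑x : E3) 0 + a 1 * (↑x : E3) 1 + a 2 * (↑x : E3) 2)^2) * hxsum
    have h7 : (∫ ω : Metric.sphere (0:E3) 1,
        (fun y : E3 => ⟪a,y⟫^4 - (‖a‖^2/3) * (⟪a,y⟫^2 * ‖y‖^2)) ↑ω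
        ∂(volume : Measure E3).toSphere) = 0 := by
      have e1 := (integral_congr_ae (μ := (volume : Measure E3).toSphere)
        (Filter.Eventually.of_forall fun x => hid x)).trans
        (MeasureTheory.integral_const_mul (-7 : ℝ) _)
      rw [h0] at e1
      linarith
    have hval := sphere_p_val a ha
    rw [h7, zero_mul] at hval
    have h1 : (0:ℝ) < ‖a‖ := norm_pos_iff.2 ha
    have h2 : (0:ℝ) < ‖a‖^4 * (π * Real.sqrt π / 3) := by positivity
    linarith
end

section
/- Let g = (a₀(r) + Σᵢ aᵢ(r) Xⁱ)² dr² + r² g_{S^{n-1}} satisfy the zero scalar curvature equation u²Δu − (n-1) r u_r + ((n-1)(n-2)/2)(u − u³) = 0 with u = a₀ + Σ aᵢ Xⁱ and a₀ > 0. Then aᵢ(r) = 0 for all i = 1,…,n and all r; i.e. u is rotationally symmetric. -/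
/-! Averaging the equation at `x` and `-x` removes its odd part and leaves
`A(r) - D(r) S(x)² = 0` with `S(x) = ∑ aᵢ(r) xⁱ` and `D(r) = (2(n-1) + 3(n-1)(n-2)/2) a₀(r) > 0`.
So the square of the linear form `S` is constant on the unit sphere; testing it on a unit vector
orthogonal to `(aᵢ(r))ᵢ`, which exists as `n ≥ 2`, shows the constant is `0`, whence `S = 0`. -/

open Module
open scoped RealInnerProductSpace

theorem exists_norm_eq_one_inner_eq_zero {𝕜 E : Type*} [RCLike 𝕜] [NormedAddCommGroup E]
    [InnerProductSpace 𝕜 E] (hE : 2 ≤ finrank 𝕜 E) (v : E) :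
    ∃ w : E, ‖w‖ = 1 ∧ inner 𝕜 v w = 0 := by
  have : FiniteDimensional 𝕜 E := Module.finite_of_finrank_pos (by omega)
  have hspan : finrank 𝕜 (𝕜 ∙ v) ≤ 1 := (finrank_span_le_card {v}).trans (by simp)
  have hcompl := (𝕜 ∙ v).finrank_add_finrank_orthogonal
  obtain ⟨⟨w, hw_orth⟩, hw⟩ := finrank_pos_iff_exists_ne_zero.mp
    (show 0 < finrank 𝕜 (𝕜 ∙ v)ᗮ by omega)
  have hw₀ : w ≠ 0 := fun h => hw (Subtype.ext h)
  refine ⟨((‖w‖ : 𝕜))⁻¹ • w, norm_smul_inv_norm hw₀, ?_⟩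
  rw [inner_smul_right, Submodule.mem_orthogonal_singleton_iff_inner_right.mp hw_orth, mul_zero]

theorem eq_zero_of_inner_sq_eq_on_sphere {E : Type*} [NormedAddCommGroup E]
    [InnerProductSpace ℝ E] (hE : 2 ≤ finrank ℝ E) {v : E} {c : ℝ}
    (h : ∀ x : E, ‖x‖ = 1 → ⟪v, x⟫ ^ 2 = c) : v = 0 := by
  obtain ⟨w, hw, hvw⟩ := exists_norm_eq_one_inner_eq_zero hE v
  have hc : c = 0 := by rw [← h w hw, hvw, sq, mul_zero]
  by_contra hv
  have hvv := h _ (norm_smul_inv_norm (𝕜 := ℝ) hv)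
  rw [inner_smul_right, real_inner_self_eq_norm_sq, hc] at hvv
  simp [hv] at hvv

theorem EuclideanSpace.inner_toLp_eq_sum {ι : Type*} [Fintype ι] (f : ι → ℝ)
    (x : EuclideanSpace ℝ ι) : ⟪WithLp.toLp 2 f, x⟫ = ∑ i, f i * x i := by
  simp [PiLp.inner_apply, mul_comm]

noncomputable def scalarFlatResidual (n : ℕ) (r u uᵣ Δu : ℝ) : ℝ :=
  u ^ 2 * Δu - ((n : ℝ) - 1) * r * uᵣ + (((n : ℝ) - 1) * ((n : ℝ) - 2) / 2) * (u - u ^ 3)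

theorem sq_eq_of_scalarFlatResidual_eq_zero {n : ℕ} (hn : 2 ≤ n) {r u₀ u₀' s s' : ℝ}
    (hu₀ : 0 < u₀)
    (hx : scalarFlatResidual n r (u₀ + s) (u₀' + s') (-((n : ℝ) - 1) * s) = 0)
    (hnegx : scalarFlatResidual n r (u₀ + -s) (u₀' + -s') (-((n : ℝ) - 1) * -s) = 0) :
    s ^ 2 = ((((n : ℝ) - 1) * ((n : ℝ) - 2) / 2) * (u₀ - u₀ ^ 3) - ((n : ℝ) - 1) * r * u₀') /
      ((2 * ((n : ℝ) - 1) + 3 * (((n : ℝ) - 1) * ((n : ℝ) - 2) / 2)) * u₀) := by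
  have hn' : (2 : ℝ) ≤ n := by exact_mod_cast hn
  have hD : 0 < (2 * ((n : ℝ) - 1) + 3 * (((n : ℝ) - 1) * ((n : ℝ) - 2) / 2)) * u₀ := by
    have : 0 ≤ ((n : ℝ) - 1) * ((n : ℝ) - 2) := by nlinarith
    exact mul_pos (by linarith) hu₀
  rw [eq_div_iff hD.ne']
  unfold scalarFlatResidual at hx hnegx
  linear_combination (-(hx + hnegx)) / 2

theorem conformally_flat_lapse_rotationally_symmetric_general
    (n : ℕ) (hn : 3 ≤ n) (r₀ : ℝ)
    (a₀ : ℝ → ℝ) (a : Fin n → ℝ → ℝ) (a₀' : ℝ → ℝ) (a' : Fin n → ℝ → ℝ)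
    (hpos : ∀ r : ℝ, r₀ < r → 0 < a₀ r)
    (hode : ∀ r : ℝ, r₀ < r → ∀ x : EuclideanSpace ℝ (Fin n), ‖x‖ = 1 →
      (a₀ r + ∑ i, a i r * x i) ^ 2 * (-((n : ℝ) - 1) * ∑ i, a i r * x i)
        - ((n : ℝ) - 1) * r * (a₀' r + ∑ i, a' i r * x i)
        + (((n : ℝ) - 1) * ((n : ℝ) - 2) / 2) *
            ((a₀ r + ∑ i, a i r * x i) - (a₀ r + ∑ i, a i r * x i) ^ 3) = 0) :
    ∀ (i : Fin n) (r : ℝ), r₀ < r → a i r = 0 := by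
  intro i r hr
  have hode_inner : ∀ x : EuclideanSpace ℝ (Fin n), ‖x‖ = 1 →
      scalarFlatResidual n r (a₀ r + ⟪WithLp.toLp 2 (a · r), x⟫)
        (a₀' r + ⟪WithLp.toLp 2 (a' · r), x⟫) (-((n : ℝ) - 1) * ⟪WithLp.toLp 2 (a · r), x⟫) = 0 := by
    intro x hx
    simpa only [scalarFlatResidual, EuclideanSpace.inner_toLp_eq_sum] using hode r hr x hx
  have hsq : ∀ x : EuclideanSpace ℝ (Fin n), ‖x‖ = 1 → ⟪WithLp.toLp 2 (a · r), x⟫ ^ 2 = _ :=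
    fun x hx => sq_eq_of_scalarFlatResidual_eq_zero (by omega) (hpos r hr) (hode_inner x hx)
      (by simpa only [inner_neg_right] using hode_inner (-x) (by rwa [norm_neg]))
  have hv := eq_zero_of_inner_sq_eq_on_sphere (by rw [finrank_euclideanSpace_fin]; omega) hsq
  simpa using congrArg (· i) hv

/-- If `g = (a₀(r) + ∑ᵢ aᵢ(r) Xⁱ)² dr² + r² g_{S^{n-1}}` satisfies the
zero scalar curvature equation `u²Δu − (n-1) r u_r + ((n-1)(n-2)/2)(u − u³) = 0`
with `u = a₀ + ∑ aᵢ Xⁱ` (so that `Δu = −(n-1) ∑ aᵢ Xⁱ`) and `a₀ > 0`, then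
`aᵢ(r) = 0` for all `i` and `r`: the lapse is rotationally symmetric. -/
theorem conformally_flat_lapse_rotationally_symmetric
    (n : ℕ) (hn : 3 ≤ n) (r₀ : ℝ)
    (a₀ : ℝ → ℝ) (a : Fin n → ℝ → ℝ) (a₀' : ℝ → ℝ) (a' : Fin n → ℝ → ℝ)
    (hd₀ : ∀ r : ℝ, r₀ < r → HasDerivAt a₀ (a₀' r) r)
    (hd : ∀ (i : Fin n) (r : ℝ), r₀ < r → HasDerivAt (a i) (a' i r) r)
    (hpos : ∀ r : ℝ, r₀ < r → 0 < a₀ r)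
    (hode : ∀ r : ℝ, r₀ < r → ∀ x : EuclideanSpace ℝ (Fin n), ‖x‖ = 1 →
      (a₀ r + ∑ i, a i r * x i) ^ 2 * (-((n : ℝ) - 1) * ∑ i, a i r * x i)
        - ((n : ℝ) - 1) * r * (a₀' r + ∑ i, a' i r * x i)
        + (((n : ℝ) - 1) * ((n : ℝ) - 2) / 2) *
            ((a₀ r + ∑ i, a i r * x i) - (a₀ r + ∑ i, a i r * x i) ^ 3) = 0) :
    ∀ (i : Fin n) (r : ℝ), r₀ < r → a i r = 0 :=
  conformally_flat_lapse_rotationally_symmetric_general n hn r₀ a₀ a a₀' a' hpos hode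
end
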